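/- arXiv:2309.07754 — 7 statements merged into one kernel-verified Lean document; each statement's English description precedes it below -/
import Mathlib

section
/- Let G be a bipartite graph and let E' be an edge cut of G, witnessed by a vertex partition (A1, A2) of V(G) with E' = E(A1, A2). Then the graph obtained from G by contracting every edge of E' is bipartite. -/
/-- The spanning subgraph of `G` whose edges are exactly the edges of the edge cut
`E(A, Aᶜ)` determined by the vertex set `A`. -/
def cutSubgraph {V : Type} (G : SimpleGraph V) (A : Set V) : SimpleGraph V where
  Adj u v := G.Adj u v ∧ ((u ∈ A ∧ v ∉ A) ∨ (u ∉ A ∧ v ∈ A))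
  symm := by
    constructor
    rintro u v ⟨h, h'⟩
    exact ⟨h.symm, by tauto⟩
  loopless := by
    constructor
    rintro u ⟨h, h'⟩
    tauto

/-- The graph obtained from `G` by contracting every edge of the subgraph `K`
(equivalently, quotienting by the connected components of the spanning subgraph `K`):
its vertices are the connected components of `K`, with two distinct components adjacent
whenever `G` has an edge between them. -/
def contractBy {V : Type} (G K : SimpleGraph V) : SimpleGraph K.ConnectedComponent where
  Adj x y := x ≠ y ∧ ∃ u v : V, G.Adj u v ∧ K.connectedComponentMk u = x ∧
    K.connectedComponentMk v = y
  symm := by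
    constructor
    rintro x y ⟨hxy, u, v, h, hu, hv⟩
    exact ⟨hxy.symm, v, u, h.symm, hv, hu⟩
  loopless := by
    constructor
    rintro x ⟨h, -⟩
    exact h rfl

/-- Contracting every edge of an edge cut of a bipartite graph yields a bipartite
graph. -/
theorem contract_edgeCut_bipartite {V : Type} [Fintype V] (G : SimpleGraph V)
    (hG : G.Colorable 2) (A : Set V) :
    (contractBy G (cutSubgraph G A)).Colorable 2 := by
  classical
  obtain ⟨c⟩ := hG
  set K := cutSubgraph G A with hK
  let g : V → ZMod 2 := fun v => ((c v).val : ZMod 2) + (if v ∈ A then 1 else 0)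
  have hcast : ∀ a b : Fin 2, ((a.val : ZMod 2) = (b.val : ZMod 2)) → a = b := by decide
  have key : ∀ u v : V, K.Adj u v → g u = g v := by
    rintro u v ⟨hadj, hcut⟩
    have hne : ((c u).val : ZMod 2) ≠ ((c v).val : ZMod 2) := fun h =>
      c.valid hadj (hcast _ _ h)
    have h1 : ((c u).val : ZMod 2) = ((c v).val : ZMod 2) + 1 := by
      revert hne
      generalize ((c u).val : ZMod 2) = a; generalize ((c v).val : ZMod 2) = b
      revert a b; decide
    rcases hcut with ⟨hu, hv⟩ | ⟨hu, hv⟩ <;>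
      simp only [g, hu, hv, if_pos, if_neg, h1, not_false_iff] <;> ring_nf <;>
      simp [show (2:ZMod 2)=0 from rfl]
  have keyW : ∀ (u v : V) (p : K.Walk u v), g u = g v := by
    intro u v p
    induction p with
    | nil => rfl
    | cons h p ih => exact (key _ _ h).trans ih
  let f : K.ConnectedComponent → ZMod 2 :=
    SimpleGraph.ConnectedComponent.lift g (fun u v p _ => keyW u v p)
  have hcard : Fintype.card (ZMod 2) = 2 := rfl
  refine hcard ▸ SimpleGraph.Coloring.colorable ⟨f, ?_⟩
  rintro x y ⟨hxy, u, v, hadj, hu, hv⟩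
  subst hu; subst hv
  simp only [SimpleGraph.ConnectedComponent.lift_mk, f]
  -- u and v are in the same side of A, else they'd be in the same component
  have hside : (u ∈ A ↔ v ∈ A) := by
    by_contra hs
    exact hxy (SimpleGraph.ConnectedComponent.sound
      (SimpleGraph.Adj.reachable ⟨hadj, by tauto⟩))
  have hne : ((c u).val : ZMod 2) ≠ ((c v).val : ZMod 2) := fun h =>
    c.valid hadj (hcast _ _ h)
  simp only [g]
  by_cases hA : u ∈ A
  · rw [if_pos hA, if_pos (hside.mp hA)]
    intro h
    exact hne (by linear_combination h)
  · rw [if_neg hA, if_neg (fun h => hA (hside.mpr h))]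
    simpa using hne
end

section
/- If a graph G admits a bipartite tree decomposition of width at most k, then G is (k+2)-colorable. -/
/-- A bipartite tree decomposition of a graph `G`: a tree `T` together with functions
`α, β` assigning to each node a set of apex vertices and a set inducing a bipartite
graph, such that `(T, α ∪ β)` is a tree decomposition of `G`, `α t` and `β t` are
disjoint, and each adhesion contains at most one vertex of `β t`. -/
structure BipTreeDecomp {V : Type} (G : SimpleGraph V) where
  ι : Type
  T : SimpleGraph ι
  tree : T.IsTree
  α : ι → Set V
  β : ι → Set V
  mem_bag : ∀ v : V, ∃ t : ι, v ∈ α t ∪ β t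
  edge_bag : ∀ ⦃u v : V⦄, G.Adj u v → ∃ t : ι, u ∈ α t ∪ β t ∧ v ∈ α t ∪ β t
  support_connected : ∀ v : V, (T.induce {t : ι | v ∈ α t ∪ β t}).Connected
  apex_disj : ∀ t : ι, α t ∩ β t = ∅
  beta_bipartite : ∀ t : ι, (G.induce (β t)).Colorable 2
  adhesion : ∀ ⦃t t' : ι⦄, T.Adj t t' → ((α t' ∪ β t') ∩ β t).Subsingleton

/-- `btwLE G k` means that the bipartite treewidth of `G` is at most `k`, i.e. `G` has
a bipartite tree decomposition of width at most `k`. -/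
def btwLE {V : Type} (G : SimpleGraph V) (k : ℕ) : Prop :=
  ∃ D : BipTreeDecomp G, ∀ t : D.ι, (D.α t).ncard ≤ k

section TreeLemmas

open SimpleGraph Set

variable {ι : Type} {T : SimpleGraph ι} {t0 t1 t2 s : ι}

/-- Nodes reachable from `t'` by a walk avoiding `t0`. -/
def Br (T : SimpleGraph ι) (t0 t' : ι) : Set ι := {s | ∃ w : T.Walk t' s, t0 ∉ w.support}

lemma self_mem_Br (h : t0 ≠ t1) : t1 ∈ Br T t0 t1 :=
  ⟨SimpleGraph.Walk.nil, by simp [h]⟩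

lemma ne_of_mem_Br (hs : s ∈ Br T t0 t1) : s ≠ t0 := by
  obtain ⟨w, hw⟩ := hs
  exact fun h => hw (h ▸ SimpleGraph.Walk.end_mem_support w)

lemma Br_eq_of_mem (ht : T.IsTree) (h1 : T.Adj t0 t1) (h2 : T.Adj t0 t2)
    (hs1 : s ∈ Br T t0 t1) (hs2 : s ∈ Br T t0 t2) : t1 = t2 := by
  haveI := Classical.decEq ι
  by_contra hne
  obtain ⟨w1, hw1⟩ := hs1
  obtain ⟨w2, hw2⟩ := hs2
  set w : T.Walk t1 t2 := w1.append w2.reverse with hw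
  have hsupp : t0 ∉ w.support := by
    rw [hw]
    intro h
    rcases (SimpleGraph.Walk.mem_support_append_iff _ _).1 h with h | h
    · exact hw1 h
    · rw [SimpleGraph.Walk.support_reverse] at h
      exact hw2 (List.mem_reverse.1 h)
  have hp : t0 ∉ (w.toPath : T.Walk t1 t2).support :=
    fun h => hsupp (SimpleGraph.Walk.support_toPath_subset w h)
  -- the path t1 - t0 - t2
  have hq : (SimpleGraph.Walk.cons h1.symm (SimpleGraph.Walk.cons h2 SimpleGraph.Walk.nil)).IsPath := by
    simp [SimpleGraph.Walk.isPath_def, List.Nodup]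
    refine ⟨⟨Ne.symm h1.ne, hne⟩, h2.ne⟩
  have := (ht.existsUnique_path t1 t2).unique (w.toPath.2) hq
  rw [this] at hp
  simp at hp

def inducedHom (T : SimpleGraph ι) (K : Set ι) : T.induce K →g T := ⟨Subtype.val, fun h => h⟩

lemma walk_in_set {K : Set ι} (hconn : (T.induce K).Connected) (hs0 : s ∈ K) (hs1 : t1 ∈ K) :
    ∃ w : T.Walk s t1, ∀ x ∈ w.support, x ∈ K := by
  obtain ⟨w0⟩ := hconn ⟨s, hs0⟩ ⟨t1, hs1⟩
  refine ⟨w0.map (inducedHom T K), ?_⟩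
  intro x hx
  change x ∈ (w0.map (inducedHom T K)).support at hx
  rw [SimpleGraph.Walk.support_map] at hx
  obtain ⟨y, _, rfl⟩ := List.mem_map.1 hx
  exact y.2

lemma exists_branch (ht : T.IsTree) {K : Set ι} (hconn : (T.induce K).Connected)
    (h0 : t0 ∉ K) : ∃ u, T.Adj t0 u ∧ K ⊆ Br T t0 u := by
  haveI := Classical.decEq ι
  obtain ⟨⟨s0, hs0⟩⟩ := hconn.nonempty
  obtain ⟨w0⟩ := ht.isConnected t0 s0
  have hne : t0 ≠ s0 := fun h => h0 (h ▸ hs0)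
  obtain ⟨p, hp⟩ := w0.toPath
  cases p with
  | nil => exact absurd rfl hne
  | cons h q =>
    rename_i u
    rw [SimpleGraph.Walk.cons_isPath_iff] at hp
    refine ⟨u, h, ?_⟩
    intro s hs
    obtain ⟨w, hw⟩ := walk_in_set hconn hs0 hs
    refine ⟨q.append w, ?_⟩
    intro hmem
    rcases (SimpleGraph.Walk.mem_support_append_iff _ _).1 hmem with h' | h'
    · exact hp.2 h'
    · exact h0 (hw _ h')

lemma branch_mem_of_mem (ht : T.IsTree) {K : Set ι} (hconn : (T.induce K).Connected)
    (h0 : t0 ∈ K) (hsK : s ∈ K) (h1 : T.Adj t0 t1) (hs : s ∈ Br T t0 t1) : t1 ∈ K := by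
  haveI := Classical.decEq ι
  obtain ⟨w0, hw0⟩ := walk_in_set hconn h0 hsK
  obtain ⟨p, hp, hsub⟩ : ∃ p : T.Walk t0 s, p.IsPath ∧ ∀ x ∈ p.support, x ∈ K :=
    ⟨w0.toPath, w0.toPath.2, fun x hx => hw0 x (SimpleGraph.Walk.support_toPath_subset w0 hx)⟩
  have hne : t0 ≠ s := Ne.symm (ne_of_mem_Br hs)
  cases p with
  | nil => exact absurd rfl hne
  | cons h q =>
    rename_i u
    rw [SimpleGraph.Walk.cons_isPath_iff] at hp
    have : u = t1 := Br_eq_of_mem ht h h1 ⟨q, hp.2⟩ hs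
    exact this ▸ hsub _ (by simp [q.start_mem_support])

end TreeLemmas

open SimpleGraph Set

lemma card_coe_ncard {V : Type} [Fintype V] (s : Set V) :
    Nat.card ↥s = s.ncard := Nat.card_coe_set_eq s

lemma exists_not_mem_of_ncard_lt {α : Type} [Fintype α] (s : Set α)
    (h : s.ncard < Fintype.card α) : ∃ a, a ∉ s := by
  by_contra hc
  push_neg at hc
  have : s = univ := eq_univ_of_forall hc
  rw [this, Set.ncard_univ, Nat.card_eq_fintype_card] at h
  omega

lemma bag_color {V : Type} [Fintype V] (G : SimpleGraph V) (k : ℕ) (A B S : Set V)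
    (hAB : A ∩ B = ∅) (hA : A.ncard ≤ k) (hB : (G.induce B).Colorable 2)
    (hSsub : S ⊆ A ∪ B) (hSB : (S ∩ B).Subsingleton)
    (c0 : V → Fin (k+2)) (hc0 : ∀ u ∈ S, ∀ v ∈ S, G.Adj u v → c0 u ≠ c0 v) :
    ∃ c1 : V → Fin (k+2), (∀ v ∈ S, c1 v = c0 v) ∧
      (∀ u ∈ A ∪ B, ∀ v ∈ A ∪ B, G.Adj u v → c1 u ≠ c1 v) := by
  classical
  have φ := hB.some
  -- cardinality facts
  have hSBcard : (S ∩ B).ncard ≤ 1 := by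
    rcases hSB.eq_empty_or_singleton with h | ⟨x, h⟩ <;> simp [h]
  have hScard : S.ncard ≤ (S ∩ A).ncard + 1 := by
    have hparts : S = (S ∩ A) ∪ (S ∩ B) := by
      ext x; constructor
      · intro hx; rcases hSsub hx with h | h
        · exact Or.inl ⟨hx, h⟩
        · exact Or.inr ⟨hx, h⟩
      · rintro (⟨h, _⟩ | ⟨h, _⟩) <;> exact h
    have h0 : S.ncard = ((S ∩ A) ∪ (S ∩ B)).ncard := by rw [← hparts]
    have h1 := Set.ncard_union_le (S ∩ A) (S ∩ B)
    omega
  have hAsplit : (A ∩ S).ncard + (A \ S).ncard = A.ncard :=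
    Set.ncard_inter_add_ncard_diff_eq_ncard A S
  have hAS : (A ∩ S).ncard = (S ∩ A).ncard := by rw [Set.inter_comm]
  set CS : Set (Fin (k+2)) := c0 '' S with hCSdef
  have hCScard : CS.ncard ≤ (S ∩ A).ncard + 1 :=
    le_trans (Set.ncard_image_le (Set.toFinite S)) hScard
  -- the injection for A \ S
  have hcardle : (A \ S).ncard ≤ (univ \ CS : Set (Fin (k+2))).ncard := by
    rw [Set.ncard_diff (subset_univ _), Set.ncard_univ, Nat.card_eq_fintype_card,
      Fintype.card_fin]
    omega
  haveI : Fintype ↥(A \ S) := Fintype.ofFinite _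
  haveI : Fintype ↥(univ \ CS : Set (Fin (k+2))) := Fintype.ofFinite _
  obtain ⟨f⟩ : Nonempty (↥(A \ S) ↪ ↥(univ \ CS : Set (Fin (k+2)))) := by
    apply Function.Embedding.nonempty_of_card_le
    rw [← Nat.card_eq_fintype_card, ← Nat.card_eq_fintype_card,
      card_coe_ncard, card_coe_ncard]
    exact hcardle
  set fimg : Set (Fin (k+2)) := Set.range (fun x : ↥(A \ S) => (f x : Fin (k+2))) with hfimgdef
  have hfimgcard : fimg.ncard ≤ (A \ S).ncard := by
    rw [hfimgdef, ← Set.image_univ]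
    calc ((fun x : ↥(A \ S) => (f x : Fin (k+2))) '' univ).ncard
        ≤ (univ : Set ↥(A \ S)).ncard := Set.ncard_image_le (Set.toFinite _)
      _ = (A \ S).ncard := by rw [Set.ncard_univ, card_coe_ncard]
  have hfimg_CS : ∀ a ∈ fimg, a ∉ CS := by
    rintro a ⟨x, rfl⟩
    exact (f x).2.2
  -- pick q then p
  obtain ⟨q, hq⟩ : ∃ q : Fin (k+2), q ∉ CS ∪ fimg := by
    apply exists_not_mem_of_ncard_lt
    rw [Fintype.card_fin]
    calc (CS ∪ fimg).ncard ≤ CS.ncard + fimg.ncard := Set.ncard_union_le _ _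
      _ < k + 2 := by omega
  obtain ⟨p, hp⟩ : ∃ p : Fin (k+2), p ∉ (c0 '' (S ∩ A)) ∪ fimg ∪ {q} := by
    apply exists_not_mem_of_ncard_lt
    rw [Fintype.card_fin]
    have h1 : (c0 '' (S ∩ A)).ncard ≤ (S ∩ A).ncard := Set.ncard_image_le (Set.toFinite _)
    calc ((c0 '' (S ∩ A)) ∪ fimg ∪ {q}).ncard
        ≤ ((c0 '' (S ∩ A)) ∪ fimg).ncard + ({q} : Set _).ncard := Set.ncard_union_le _ _
      _ ≤ (c0 '' (S ∩ A)).ncard + fimg.ncard + 1 := by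
          have := Set.ncard_union_le (c0 '' (S ∩ A)) fimg
          simp only [Set.ncard_singleton]; omega
      _ < k + 2 := by omega
  have hqCS : q ∉ CS := fun h => hq (Or.inl h)
  have hqfimg : q ∉ fimg := fun h => hq (Or.inr h)
  have hpSA : p ∉ c0 '' (S ∩ A) := fun h => hp (Or.inl (Or.inl h))
  have hpfimg : p ∉ fimg := fun h => hp (Or.inl (Or.inr h))
  have hpq : p ≠ q := fun h => hp (Or.inr (by simp [h]))
  -- the side of the precolored β-vertex
  set σ0 : Fin 2 := if h : (S ∩ B).Nonempty then φ ⟨h.choose, h.choose_spec.2⟩ else 0 with hσ0def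
  -- the coloring
  set c1 : V → Fin (k+2) := fun v =>
    if hS : v ∈ S then c0 v
    else if hA : v ∈ A then (f ⟨v, hA, hS⟩ : Fin (k+2))
    else if hBm : v ∈ B then (if φ ⟨v, hBm⟩ = σ0 then p else q)
    else c0 v with hc1def
  have hc1S : ∀ v ∈ S, c1 v = c0 v := fun v hv => by simp [hc1def, hv]
  have hc1A : ∀ v (hA : v ∈ A) (hS : v ∉ S), c1 v = (f ⟨v, hA, hS⟩ : Fin (k+2)) := by
    intro v hvA hvS; simp [hc1def, hvS, hvA]
  have hc1B : ∀ v (hBm : v ∈ B) (hS : v ∉ S),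
      c1 v = (if φ ⟨v, hBm⟩ = σ0 then p else q) := by
    intro v hvB hvS
    have hvA : v ∉ A := fun h => by
      have : v ∈ A ∩ B := ⟨h, hvB⟩
      rw [hAB] at this; exact this
    simp [hc1def, hvS, hvA, hvB]
  refine ⟨c1, hc1S, ?_⟩
  -- properness
  intro u hu v hv hadj
  have hne := hadj.ne
  -- helper: values on S lie in CS
  have hmemCS : ∀ x ∈ S, c1 x ∈ CS := fun x hx => by
    rw [hc1S x hx]; exact ⟨x, hx, rfl⟩
  have hmemfimg : ∀ x (hA : x ∈ A) (hS : x ∉ S), c1 x ∈ fimg := by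
    intro x hxA hxS; rw [hc1A x hxA hxS]; exact ⟨⟨x, hxA, hxS⟩, rfl⟩
  have hBpq : ∀ x (hBm : x ∈ B) (hS : x ∉ S), c1 x = p ∨ c1 x = q := by
    intro x hxB hxS; rw [hc1B x hxB hxS]
    by_cases h : φ ⟨x, hxB⟩ = σ0 <;> simp [h]
  -- the B-side adjacency fact
  have hindadj : ∀ (x y : V) (hx : x ∈ B) (hy : y ∈ B), G.Adj x y →
      φ ⟨x, hx⟩ ≠ φ ⟨y, hy⟩ := by
    intro x y hx hy hxy
    exact φ.valid (by simpa using hxy)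
  -- case analysis
  by_cases huS : u ∈ S <;> by_cases hvS : v ∈ S
  · exact hc0 u huS v hvS hadj ∘ (by rw [hc1S u huS, hc1S v hvS] at *; exact ·)
  · -- u ∈ S, v ∉ S
    rcases hv with hvA | hvB
    · intro h
      have h1 := hmemCS u huS
      rw [h] at h1
      exact hfimg_CS _ (hmemfimg v hvA hvS) h1
    · by_cases hvA : v ∈ A
      · intro h
        have h1 := hmemCS u huS
        rw [h] at h1
        exact hfimg_CS _ (hmemfimg v hvA hvS) h1
      · -- v ∈ B \ S (and ∉ A)
        rcases hSsub huS with huA | huB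
        · -- u ∈ S ∩ A
          rcases hBpq v hvB hvS with h | h
          · rw [hc1S u huS, h]; intro heq
            exact hpSA ⟨u, ⟨huS, huA⟩, heq⟩
          · rw [hc1S u huS, h]; intro heq
            exact hqCS ⟨u, huS, heq⟩
        · -- u ∈ S ∩ B : the φ argument
          have hmem : (S ∩ B).Nonempty := ⟨u, huS, huB⟩
          have hσ0 : σ0 = φ ⟨u, huB⟩ := by
            rw [hσ0def, dif_pos hmem]
            have := hSB hmem.choose_spec ⟨huS, huB⟩
            congr 1
            exact Subtype.ext this
          have hφ : φ ⟨v, hvB⟩ ≠ σ0 := by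
            rw [hσ0]
            exact fun h => (hindadj v u hvB huB hadj.symm) h
          rw [hc1S u huS, hc1B v hvB hvS, if_neg hφ]
          intro heq
          exact hqCS ⟨u, huS, heq⟩
  · -- u ∉ S, v ∈ S : symmetric
    rcases hu with huA | huB
    · intro h
      have h1 := hmemCS v hvS
      rw [← h] at h1
      exact hfimg_CS _ (hmemfimg u huA huS) h1
    · by_cases huA : u ∈ A
      · intro h
        have h1 := hmemCS v hvS
        rw [← h] at h1
        exact hfimg_CS _ (hmemfimg u huA huS) h1
      · rcases hSsub hvS with hvA | hvB
        · rcases hBpq u huB huS with h | h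
          · rw [hc1S v hvS, h]; intro heq
            exact hpSA ⟨v, ⟨hvS, hvA⟩, heq.symm⟩
          · rw [hc1S v hvS, h]; intro heq
            exact hqCS ⟨v, hvS, heq.symm⟩
        · have hmem : (S ∩ B).Nonempty := ⟨v, hvS, hvB⟩
          have hσ0 : σ0 = φ ⟨v, hvB⟩ := by
            rw [hσ0def, dif_pos hmem]
            have := hSB hmem.choose_spec ⟨hvS, hvB⟩
            congr 1
            exact Subtype.ext this
          have hφ : φ ⟨u, huB⟩ ≠ σ0 := by
            rw [hσ0]
            exact fun h => (hindadj u v huB hvB hadj) h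
          rw [hc1S v hvS, hc1B u huB huS, if_neg hφ]
          intro heq
          exact hqCS ⟨v, hvS, heq.symm⟩
  · -- both ∉ S
    by_cases huA : u ∈ A <;> by_cases hvA : v ∈ A
    · -- both in A \ S : injectivity
      rw [hc1A u huA huS, hc1A v hvA hvS]
      intro heq
      have : (⟨u, huA, huS⟩ : ↥(A \ S)) = ⟨v, hvA, hvS⟩ :=
        f.injective (Subtype.ext heq)
      exact hne (congrArg Subtype.val this)
    · have hvB : v ∈ B := hv.resolve_left hvA
      rcases hBpq v hvB hvS with h | h <;> rw [hc1A u huA huS, h] <;> intro heq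
      · exact hpfimg (heq ▸ ⟨⟨u, huA, huS⟩, rfl⟩)
      · exact hqfimg (heq ▸ ⟨⟨u, huA, huS⟩, rfl⟩)
    · have huB : u ∈ B := hu.resolve_left huA
      rcases hBpq u huB huS with h | h <;> rw [hc1A v hvA hvS, h] <;> intro heq
      · exact hpfimg (heq.symm ▸ ⟨⟨v, hvA, hvS⟩, rfl⟩)
      · exact hqfimg (heq.symm ▸ ⟨⟨v, hvA, hvS⟩, rfl⟩)
    · -- both in B \ S : two sides
      have huB : u ∈ B := hu.resolve_left huA
      have hvB : v ∈ B := hv.resolve_left hvA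
      have hφ := hindadj u v huB hvB hadj
      rw [hc1B u huB huS, hc1B v hvB hvS]
      by_cases h1 : φ ⟨u, huB⟩ = σ0 <;> by_cases h2 : φ ⟨v, hvB⟩ = σ0
      · exact absurd (h1.trans h2.symm) hφ
      · simpa [h1, h2] using hpq
      · simpa [h1, h2] using hpq.symm
      · have : ∀ a b c : Fin 2, a ≠ b → a = c ∨ b = c := by decide
        rcases this _ _ σ0 hφ with h | h
        · exact absurd h h1
        · exact absurd h h2

noncomputable def restrictDecomp {V : Type} (G : SimpleGraph V) (D : BipTreeDecomp G)
    (Us : Set V) : BipTreeDecomp (G.induce Us) where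
  ι := D.ι
  T := D.T
  tree := D.tree
  α t := Subtype.val ⁻¹' D.α t
  β t := Subtype.val ⁻¹' D.β t
  mem_bag x := by obtain ⟨t, ht⟩ := D.mem_bag x.val; exact ⟨t, ht⟩
  edge_bag u v h := by obtain ⟨t, ht⟩ := D.edge_bag h; exact ⟨t, ht⟩
  support_connected x := D.support_connected x.val
  apex_disj t := by rw [← Set.preimage_inter, D.apex_disj, Set.preimage_empty]
  beta_bipartite t := by
    obtain ⟨φ⟩ := D.beta_bipartite t
    exact ⟨SimpleGraph.Coloring.mk (fun x => φ ⟨x.1.1, x.2⟩) (fun {a b} h => φ.valid h)⟩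
  adhesion t t' h := by
    intro x hx y hy
    exact Subtype.ext (D.adhesion h ⟨hx.1, hx.2⟩ ⟨hy.1, hy.2⟩)

def Claim (n d : ℕ) : Prop :=
  ∀ {V : Type} [Fintype V] (k : ℕ) (G : SimpleGraph V) (D : BipTreeDecomp G),
    (∀ t, (D.α t).ncard ≤ k) → ∀ (t0 : D.ι) (S : Set V) (c0 : V → Fin (k+2)),
    S ⊆ D.α t0 ∪ D.β t0 → (S ∩ D.β t0).Subsingleton →
    (∀ u ∈ S, ∀ v ∈ S, G.Adj u v → c0 u ≠ c0 v) →
    (Set.univ \ S).ncard ≤ n →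
    (Set.univ ⊆ S ∨ ∃ v, v ∉ S ∧ ∃ s, v ∈ D.α s ∪ D.β s ∧
      ∃ p : D.T.Walk t0 s, p.IsPath ∧ p.length ≤ d) →
    ∃ c : V → Fin (k+2), (∀ u v, G.Adj u v → c u ≠ c v) ∧ ∀ v ∈ S, c v = c0 v

lemma auxstep (n d : ℕ) (IH : ∀ n' d', n' < n ∨ (n' = n ∧ d' < d) → Claim n' d') :
    Claim n d := by
  intro V _ k G D hw t0 S c0 hS hSβ hc0 hn hwit
  classical
  by_cases hall : (Set.univ : Set V) ⊆ S
  · exact ⟨c0, fun u v h => hc0 u (hall (Set.mem_univ u)) v (hall (Set.mem_univ v)) h,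
      fun v _ => rfl⟩
  obtain ⟨v0, hv0S, s0, hv0bag, p, hpPath, hplen⟩ := hwit.resolve_left hall
  obtain ⟨c1, hc1S, hc1prop⟩ := bag_color G k (D.α t0) (D.β t0) S (D.apex_disj t0) (hw t0)
    (D.beta_bipartite t0) hS hSβ c0 hc0
  have hbranch : ∀ v, v ∉ D.α t0 ∪ D.β t0 →
      ∃ u, D.T.Adj t0 u ∧ {t | v ∈ D.α t ∪ D.β t} ⊆ Br D.T t0 u := by
    intro v hv
    exact exists_branch D.tree (D.support_connected v) hv
  choose nbr hnbr1 hnbr2 using hbranch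
  set U : D.ι → Set V := fun t' => {v | ∃ s ∈ Br D.T t0 t', v ∈ D.α s ∪ D.β s} with hUdef
  have hmemU : ∀ v (h : v ∉ D.α t0 ∪ D.β t0), v ∈ U (nbr v h) := by
    intro v h
    obtain ⟨s, hs⟩ := D.mem_bag v
    exact ⟨s, hnbr2 v h hs, hs⟩
  have huniq : ∀ v (h : v ∉ D.α t0 ∪ D.β t0) t', D.T.Adj t0 t' → v ∈ U t' → t' = nbr v h := by
    rintro v h t' hadj ⟨s, hsBr, hsbag⟩
    exact Br_eq_of_mem D.tree hadj (hnbr1 v h) hsBr (hnbr2 v h hsbag)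
  have hbagU : ∀ t', D.T.Adj t0 t' → ∀ v ∈ U t', v ∈ D.α t0 ∪ D.β t0 →
      v ∈ D.α t' ∪ D.β t' := by
    rintro t' hadj v ⟨s, hsBr, hsbag⟩ hv0
    exact branch_mem_of_mem D.tree (D.support_connected v) hv0 hsbag hadj hsBr
  have hUsub : ∀ t', U t' \ (D.α t0 ∪ D.β t0) ⊆ Set.univ \ S :=
    fun t' v hv => ⟨trivial, fun hvS => hv.2 (hS hvS)⟩
  -- per-branch colorings
  have hcol : ∀ t', D.T.Adj t0 t' → ∃ c' : ↥(U t') → Fin (k+2),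
      (∀ x y : ↥(U t'), (G.induce (U t')).Adj x y → c' x ≠ c' y) ∧
      (∀ x : ↥(U t'), x.val ∈ D.α t0 ∪ D.β t0 → c' x = c1 x.val) := by
    intro t' hadj
    haveI : Fintype ↥(U t') := Fintype.ofFinite _
    set D' := restrictDecomp G D (U t') with hD'def
    have hw' : ∀ s, (D'.α s).ncard ≤ k := by
      intro s
      refine le_trans (Set.ncard_le_ncard_of_injOn Subtype.val (fun x hx => hx)
        (Subtype.val_injective.injOn) (Set.toFinite _)) (hw s)
    set S' : Set ↥(U t') := Subtype.val ⁻¹' (D.α t0 ∪ D.β t0) with hS'def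
    have hS'sub : S' ⊆ D'.α t' ∪ D'.β t' := by
      intro x hx
      exact hbagU t' hadj x.val x.2 hx
    have hS'β : (S' ∩ D'.β t').Subsingleton := by
      intro x hx y hy
      exact Subtype.ext (D.adhesion hadj.symm ⟨hx.1, hx.2⟩ ⟨hy.1, hy.2⟩)
    have hc0' : ∀ x ∈ S', ∀ y ∈ S', (G.induce (U t')).Adj x y → c1 x.val ≠ c1 y.val := by
      intro x hx y hy hxy
      exact hc1prop x.val hx y.val hy hxy
    have hX : ((Set.univ \ S' : Set ↥(U t'))).ncard = (U t' \ (D.α t0 ∪ D.β t0)).ncard := by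
      rw [← Set.ncard_image_of_injective _ Subtype.val_injective]
      congr 1
      ext v
      constructor
      · rintro ⟨x, ⟨-, hx⟩, rfl⟩; exact ⟨x.2, hx⟩
      · rintro ⟨hvU, hvb⟩; exact ⟨⟨v, hvU⟩, ⟨trivial, hvb⟩, rfl⟩
    have hXle : (U t' \ (D.α t0 ∪ D.β t0)).ncard ≤ (Set.univ \ S).ncard :=
      Set.ncard_le_ncard (hUsub t') (Set.toFinite _)
    by_cases hcase : (U t' \ (D.α t0 ∪ D.β t0)).ncard < (Set.univ \ S).ncard
    · -- strictly fewer uncolored vertices in the branch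
      obtain ⟨d', hwit'⟩ : ∃ d', (Set.univ : Set ↥(U t')) ⊆ S' ∨ ∃ x, x ∉ S' ∧
          ∃ s, x ∈ D'.α s ∪ D'.β s ∧ ∃ q : D.T.Walk t' s, q.IsPath ∧ q.length ≤ d' := by
        by_cases hex : ∃ x : ↥(U t'), x ∉ S'
        · obtain ⟨x, hx⟩ := hex
          obtain ⟨s, hs⟩ := D.mem_bag x.val
          obtain ⟨w⟩ := D.tree.isConnected t' s
          exact ⟨(w.toPath : D.T.Walk t' s).length,
            Or.inr ⟨x, hx, s, hs, w.toPath, (w.toPath).2, le_rfl⟩⟩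
        · push_neg at hex
          exact ⟨0, Or.inl fun x _ => hex x⟩
      exact IH (U t' \ (D.α t0 ∪ D.β t0)).ncard d' (Or.inl (lt_of_lt_of_le hcase hn)) k
        (G.induce (U t')) D' hw' t' S' (fun x => c1 x.val) hS'sub hS'β hc0'
        (le_of_eq hX) hwit'
    · -- the branch contains all uncolored vertices
      have heqset : U t' \ (D.α t0 ∪ D.β t0) = Set.univ \ S := by
        apply Set.eq_of_subset_of_ncard_le (hUsub t') ?_ (Set.toFinite _)
        omega
      have hv0' : v0 ∈ U t' \ (D.α t0 ∪ D.β t0) := by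
        rw [heqset]; exact ⟨trivial, hv0S⟩
      have hv0nb : v0 ∉ D.α t0 ∪ D.β t0 := hv0'.2
      have hv0U : v0 ∈ U t' := hv0'.1
      have ht0s0 : t0 ≠ s0 := by
        intro h; subst h; exact hv0nb hv0bag
      cases p with
      | nil => exact absurd rfl ht0s0
      | cons hadj1 q =>
        rename_i tmid
        rw [SimpleGraph.Walk.cons_isPath_iff] at hpPath
        have hs0Br1 : s0 ∈ Br D.T t0 tmid := ⟨q, hpPath.2⟩
        have htm : tmid = t' := by
          have h1 : t' = nbr v0 hv0nb := huniq v0 hv0nb t' hadj hv0U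
          have h2 : tmid = nbr v0 hv0nb :=
            Br_eq_of_mem D.tree hadj1 (hnbr1 v0 hv0nb) hs0Br1 (hnbr2 v0 hv0nb hv0bag)
          exact h2.trans h1.symm
        subst htm
        have hqd : q.length < d := by
          have : q.length + 1 ≤ d := by simpa using hplen
          omega
        exact IH n q.length (Or.inr ⟨rfl, hqd⟩) k
          (G.induce (U tmid)) D' hw' tmid S' (fun x => c1 x.val) hS'sub hS'β hc0'
          (le_trans (le_of_eq hX) (le_trans hXle hn))
          (Or.inr ⟨⟨v0, hv0U⟩, (fun h => hv0nb h), s0, hv0bag, q, hpPath.1, le_rfl⟩)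
  choose col hcolprop hcolS using hcol
  have col_congr : ∀ {ta tb : D.ι} (h : ta = tb) (ha : D.T.Adj t0 ta) (hb : D.T.Adj t0 tb)
      (x : V) (hxa : x ∈ U ta) (hxb : x ∈ U tb),
      col ta ha ⟨x, hxa⟩ = col tb hb ⟨x, hxb⟩ := by
    rintro ta tb rfl ha hb x hxa hxb
    rfl
  set c : V → Fin (k+2) := fun v =>
    if h : v ∈ D.α t0 ∪ D.β t0 then c1 v else col (nbr v h) (hnbr1 v h) ⟨v, hmemU v h⟩
    with hcdef
  have hcbag : ∀ v (h : v ∈ D.α t0 ∪ D.β t0), c v = c1 v := by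
    intro v h; rw [hcdef]; exact dif_pos h
  have hcnb : ∀ v (h : v ∉ D.α t0 ∪ D.β t0),
      c v = col (nbr v h) (hnbr1 v h) ⟨v, hmemU v h⟩ := by
    intro v h; rw [hcdef]; exact dif_neg h
  refine ⟨c, ?_, ?_⟩
  · intro u v hadj
    obtain ⟨t, hut, hvt⟩ := D.edge_bag hadj
    by_cases hu0 : u ∈ D.α t0 ∪ D.β t0 <;> by_cases hv0 : v ∈ D.α t0 ∪ D.β t0
    · rw [hcbag u hu0, hcbag v hv0]; exact hc1prop u hu0 v hv0 hadj
    · have huU : u ∈ U (nbr v hv0) := ⟨t, hnbr2 v hv0 hvt, hut⟩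
      rw [hcbag u hu0, hcnb v hv0,
        ← hcolS (nbr v hv0) (hnbr1 v hv0) ⟨u, huU⟩ hu0]
      exact hcolprop (nbr v hv0) (hnbr1 v hv0) ⟨u, huU⟩ ⟨v, hmemU v hv0⟩ hadj
    · have hvU : v ∈ U (nbr u hu0) := ⟨t, hnbr2 u hu0 hut, hvt⟩
      rw [hcbag v hv0, hcnb u hu0,
        ← hcolS (nbr u hu0) (hnbr1 u hu0) ⟨v, hvU⟩ hv0]
      exact hcolprop (nbr u hu0) (hnbr1 u hu0) ⟨u, hmemU u hu0⟩ ⟨v, hvU⟩ hadj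
    · have hvU : v ∈ U (nbr u hu0) := ⟨t, hnbr2 u hu0 hut, hvt⟩
      have heq : nbr u hu0 = nbr v hv0 := huniq v hv0 (nbr u hu0) (hnbr1 u hu0) hvU
      rw [hcnb u hu0, hcnb v hv0,
        col_congr heq.symm (hnbr1 v hv0) (hnbr1 u hu0) v (hmemU v hv0) hvU]
      exact hcolprop (nbr u hu0) (hnbr1 u hu0) ⟨u, hmemU u hu0⟩ ⟨v, hvU⟩ hadj
  · intro v hv
    rw [hcbag v (hS hv), hc1S v hv]

lemma claim_all : ∀ n d, Claim n d := by
  intro n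
  induction n using Nat.strong_induction_on with
  | _ n IHn =>
    intro d
    induction d using Nat.strong_induction_on with
    | _ d IHd =>
      apply auxstep
      intro n' d' h
      rcases h with h | ⟨rfl, h⟩
      · exact IHn n' h d'
      · exact IHd d' h

/-- If a graph admits a bipartite tree decomposition of width at most `k`, then it is
`(k + 2)`-colorable. -/
theorem colorable_of_btw_le {V : Type} [Fintype V] (G : SimpleGraph V) (k : ℕ)
    (D : BipTreeDecomp G) (hw : ∀ t : D.ι, (D.α t).ncard ≤ k) :
    G.Colorable (k + 2) := by
  classical
  obtain ⟨t0⟩ : Nonempty D.ι := D.tree.isConnected.nonempty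
  obtain ⟨d0, hwit⟩ : ∃ d0, (Set.univ : Set V) ⊆ (∅ : Set V) ∨ ∃ v, v ∉ (∅ : Set V) ∧
      ∃ s, v ∈ D.α s ∪ D.β s ∧ ∃ p : D.T.Walk t0 s, p.IsPath ∧ p.length ≤ d0 := by
    by_cases hV : Nonempty V
    · obtain ⟨v⟩ := hV
      obtain ⟨s, hs⟩ := D.mem_bag v
      obtain ⟨w⟩ := D.tree.isConnected t0 s
      exact ⟨(w.toPath : D.T.Walk t0 s).length,
        Or.inr ⟨v, (by simp), s, hs, w.toPath, (w.toPath).2, le_rfl⟩⟩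
    · exact ⟨0, Or.inl fun v _ => absurd ⟨v⟩ hV⟩
  obtain ⟨c, hc, -⟩ := claim_all (Set.univ \ (∅ : Set V)).ncard d0 k G D hw t0 ∅
    (fun _ => 0) (Set.empty_subset _) (by simp) (by simp) le_rfl hwit
  exact ⟨SimpleGraph.Coloring.mk c fun hab => hc _ _ hab⟩
end

section
/- Let G and H be graphs and let η be an H-expansion in G. Then the following are equivalent: (1) there is a 2-coloring of the subgraph ∪η that is proper on each node η(v) and such that every edge η(uv) (for uv ∈ E(H)) is monochromatic; (2) every cycle in ∪η has an even number of edges lying in the nodes ∪_{v∈V(H)} η(v). -/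
namespace ExpansionAux

open SimpleGraph

variable {V : Type} {G' : SimpleGraph V}

/-- Weighted sum of a walk's edges in `ZMod 2`. -/
def wsum (f : Sym2 V → ZMod 2) {a b : V} (p : G'.Walk a b) : ZMod 2 :=
  (p.edges.map f).sum

lemma wsum_cons (f : Sym2 V → ZMod 2) {a b c : V} (h : G'.Adj a b) (p : G'.Walk b c) :
    wsum f (Walk.cons h p) = f s(a, b) + wsum f p := by
  simp [wsum]

lemma wsum_append (f : Sym2 V → ZMod 2) {a b c : V} (p : G'.Walk a b) (q : G'.Walk b c) :
    wsum f (p.append q) = wsum f p + wsum f q := by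
  simp [wsum, Walk.edges_append]

lemma wsum_reverse (f : Sym2 V → ZMod 2) {a b : V} (p : G'.Walk a b) :
    wsum f p.reverse = wsum f p := by
  simp [wsum, Walk.edges_reverse, List.map_reverse, List.sum_reverse]

lemma wsum_perm (f : Sym2 V → ZMod 2) {a b c d : V} {p : G'.Walk a b} {q : G'.Walk c d}
    (h : p.edges.Perm q.edges) : wsum f p = wsum f q :=
  (h.map f).sum_eq

/-- Key lemma: if every cycle has zero weight, every closed walk has zero weight. -/
lemma closed_wsum_zero [DecidableEq V] (f : Sym2 V → ZMod 2)
    (hcyc : ∀ (u : V) (p : G'.Walk u u), p.IsCycle → wsum f p = 0) :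
    ∀ (n : ℕ) (u : V) (p : G'.Walk u u), p.length = n → wsum f p = 0 := by
  intro n
  induction n using Nat.strong_induction_on with
  | _ n ih =>
  intro u p hlen
  by_cases hdup : p.support.tail.Nodup
  · cases p with
    | nil => simp [wsum]
    | @cons _ v _ h q =>
      rw [Walk.support_cons, List.tail_cons] at hdup
      have hq : q.IsPath := (Walk.isPath_def q).mpr hdup
      by_cases hme : s(u, v) ∈ q.edges
      · -- then q has length 1 and p backtracks along one edge
        cases q with
        | nil => exact absurd rfl h.ne
        | @cons _ w _ h2 r =>
          rw [Walk.edges_cons, List.mem_cons] at hme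
          have hvr : v ∉ r.support := by
            have := (Walk.isPath_def _).mp hq
            rw [Walk.support_cons] at this
            exact (List.nodup_cons.mp this).1
          have huw : u = w := by
            rcases hme with he | he
            · rw [Sym2.eq_iff] at he
              rcases he with ⟨h1, h2⟩ | ⟨h1, _⟩
              · exact absurd h1 h.ne
              · exact h1
            · exact absurd (r.snd_mem_support_of_mem_edges he) hvr
          subst huw
          have hr : r.IsPath := by
            have := (Walk.isPath_def _).mp hq
            rw [Walk.support_cons] at this
            exact (Walk.isPath_def r).mpr (List.nodup_cons.mp this).2
          have : r = Walk.nil := (Walk.isPath_iff_eq_nil (p := r)).mp hr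
          subst this
          rw [wsum_cons, wsum_cons]
          simp only [wsum, Walk.edges_nil, List.map_nil, List.sum_nil, add_zero]
          rw [Sym2.eq_swap (a := v) (b := u)]
          exact CharTwo.add_self_eq_zero _
      · exact hcyc u _ ((Walk.cons_isCycle_iff q h).mpr ⟨hq, hme⟩)
  · -- a vertex repeats: rotate and split into two shorter closed walks
    obtain ⟨x, hx2⟩ : ∃ x, 2 ≤ p.support.tail.count x := by
      by_contra hc
      push_neg at hc
      exact hdup (List.nodup_iff_count_le_one.mpr fun x => by have := hc x; omega)
    have hxs : x ∈ p.support := by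
      apply List.mem_of_mem_tail
      exact List.count_pos_iff.mp (by omega)
    obtain ⟨p', hrot, hsup⟩ : ∃ p' : G'.Walk x x,
        p'.edges.Perm p.edges ∧ p'.support.tail.Perm p.support.tail :=
      ⟨p.rotate x hxs, (Walk.rotate_edges p x hxs).perm, (Walk.support_rotate p x hxs).perm⟩
    have hlen' : p'.length = n := by
      rw [← Walk.length_edges, hrot.length_eq, Walk.length_edges, hlen]
    have hcount : 2 ≤ p'.support.tail.count x := by
      rw [hsup.count_eq]; exact hx2
    rw [← wsum_perm f hrot]
    cases p' with
    | nil => simp at hcount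
    | @cons _ y _ h' q' =>
      rw [Walk.support_cons, List.tail_cons] at hcount
      have hxq : x ∈ q'.support := List.count_pos_iff.mp (by omega)
      have hspec := q'.take_spec hxq
      have hc1 := q'.count_support_takeUntil_eq_one hxq
      have hdroplen : 1 ≤ (q'.dropUntil x hxq).length := by
        have hsupp : q'.support =
            (q'.takeUntil x hxq).support ++ (q'.dropUntil x hxq).support.tail := by
          rw [← Walk.support_append, hspec]
        have hct : 1 ≤ (q'.dropUntil x hxq).support.tail.count x := by
          rw [hsupp, List.count_append, hc1] at hcount
          omega
        have hne : (q'.dropUntil x hxq).support.tail ≠ [] := by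
          intro hnil; rw [hnil] at hct; simp at hct
        have h5 := Walk.length_support (q'.dropUntil x hxq)
        have h6 : (q'.dropUntil x hxq).support.tail.length =
            (q'.dropUntil x hxq).support.length - 1 := List.length_tail
        have h7 := List.length_pos_iff.mpr hne
        omega
      have hlq : (q'.takeUntil x hxq).length + (q'.dropUntil x hxq).length = q'.length := by
        have := congrArg Walk.length hspec
        rwa [Walk.length_append] at this
      have hlenp : q'.length + 1 = n := by
        rw [← hlen']; simp [Walk.length_cons]
      have h1 := ih ((q'.takeUntil x hxq).length + 1) (by omega) x
        (Walk.cons h' (q'.takeUntil x hxq)) (by simp [Walk.length_cons])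
      have h2 := ih ((q'.dropUntil x hxq).length) (by omega) x
        (q'.dropUntil x hxq) rfl
      calc wsum f (Walk.cons h' q')
          = wsum f (Walk.cons h' ((q'.takeUntil x hxq).append (q'.dropUntil x hxq))) := by
            rw [hspec]
        _ = wsum f (Walk.cons h' (q'.takeUntil x hxq)) + wsum f (q'.dropUntil x hxq) := by
            rw [wsum_cons, wsum_cons, wsum_append, add_assoc]
        _ = 0 := by rw [h1, h2, add_zero]


lemma wsum_congr (f : Sym2 V → ZMod 2)
    (hcl : ∀ (u : V) (p : G'.Walk u u), wsum f p = 0)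
    {x y : V} (p q : G'.Walk x y) : wsum f p = wsum f q := by
  have h := hcl x (p.append q.reverse)
  rw [wsum_append, wsum_reverse] at h
  have h2 : wsum f q + wsum f q = 0 := CharTwo.add_self_eq_zero _
  linear_combination h - h2

lemma filter_length_cast {α : Type*} (P : α → Prop) [DecidablePred P] (l : List α) :
    (((l.filter (fun a => P a)).length : ZMod 2)) =
      (l.map (fun a => if P a then (1 : ZMod 2) else 0)).sum := by
  induction l with
  | nil => simp
  | cons a l ihl =>
    rw [List.filter_cons, List.map_cons, List.sum_cons, ← ihl]
    by_cases h : P a <;> simp [h] <;> ring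

lemma step_lemma (f : Sym2 V → ZMod 2)
    (hcl : ∀ (u : V) (p : G'.Walk u u), wsum f p = 0)
    (rep : V → V) (hre : ∀ v, G'.Reachable (rep v) v)
    (hrep : ∀ ⦃u v : V⦄, G'.Adj u v → rep u = rep v)
    {u v : V} (h : G'.Adj u v) :
    wsum f (hre v).some = wsum f (hre u).some + f s(u, v) := by
  have e := hrep h
  set q : G'.Walk (rep v) v :=
    Walk.copy ((hre u).some.append (Walk.cons h Walk.nil)) e rfl with hq
  have h1 : wsum f q = wsum f (hre u).some + f s(u, v) := by
    simp [hq, wsum, Walk.edges_copy, Walk.edges_append]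
  rw [wsum_congr f hcl (hre v).some q, h1]


lemma fin2_ne_iff (a b : Fin 2) :
    ¬((a.val : ZMod 2) = (b.val : ZMod 2)) ↔ ¬(a = b) := by revert a b; decide

lemma fin2_add_of_ne {a b : Fin 2} (h : a ≠ b) :
    ((a.val : ZMod 2) + (b.val : ZMod 2)) = 1 := by revert a b h; decide

lemma fin2_add_of_eq {a b : Fin 2} (h : a = b) :
    ((a.val : ZMod 2) + (b.val : ZMod 2)) = 0 := by revert a b h; decide

lemma zmod2_if_eq_iff (a b : ZMod 2) :
    ((if a = 0 then (0 : Fin 2) else 1) = (if b = 0 then (0 : Fin 2) else 1)) ↔ a = b := by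
  revert a b; decide

lemma zmod2_ne_add_one (a : ZMod 2) : a ≠ a + 1 := by revert a; decide

end ExpansionAux



/-- An `H`-expansion in `G`: each vertex `w` of `H` is assigned a subgraph of `G`
(its *node*) which is a tree, the nodes are pairwise vertex-disjoint, each leaf of a
node is incident to an edge of the expansion, and each edge `ab` of `H` is assigned an
edge of `G` with one endpoint in the node of `a` and the other in the node of `b`. -/
structure Expansion {V W : Type} (G : SimpleGraph V) (H : SimpleGraph W) where
  node : W → G.Subgraph
  node_tree : ∀ w, (node w).coe.IsTree
  node_disj : ∀ ⦃w w' : W⦄, w ≠ w' → Disjoint (node w).verts (node w').verts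
  eFun : ∀ ⦃a b : W⦄, H.Adj a b → V × V
  eFun_adj : ∀ ⦃a b : W⦄ (h : H.Adj a b), G.Adj (eFun h).1 (eFun h).2
  eFun_mem_fst : ∀ ⦃a b : W⦄ (h : H.Adj a b), (eFun h).1 ∈ (node a).verts
  eFun_mem_snd : ∀ ⦃a b : W⦄ (h : H.Adj a b), (eFun h).2 ∈ (node b).verts
  eFun_symm : ∀ ⦃a b : W⦄ (h : H.Adj a b), eFun h.symm = ((eFun h).2, (eFun h).1)
  leaf_cond : ∀ w : W, ∀ x ∈ (node w).verts,
    ({y | (node w).Adj x y}).Subsingleton →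
      ∃ (a b : W) (h : H.Adj a b), x = (eFun h).1 ∨ x = (eFun h).2


/-- The union `∪η` of an expansion `η`: the subgraph of `G` consisting of all the
nodes of `η` together with all the edges of `η`. -/
def Expansion.unionGraph {V W : Type} {G : SimpleGraph V} {H : SimpleGraph W}
    (η : Expansion G H) : SimpleGraph V where
  Adj u v := (∃ w, (η.node w).Adj u v) ∨
    (∃ (a b : W) (h : H.Adj a b), (u, v) = η.eFun h ∨ (v, u) = η.eFun h)
  symm := by
    refine ⟨?_⟩
    rintro u v (⟨w, h⟩ | ⟨a, b, h, h'⟩)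
    · exact Or.inl ⟨w, h.symm⟩
    · exact Or.inr ⟨a, b, h, h'.symm⟩
  loopless := by
    refine ⟨?_⟩
    rintro u (⟨w, h⟩ | ⟨a, b, h, h' | h'⟩)
    · exact (η.node w).coe.irrefl (by exact h.coe)
    · exact G.irrefl (by have := η.eFun_adj h; rw [← h'] at this; exact this)
    · exact G.irrefl (by have := η.eFun_adj h; rw [← h'] at this; exact this)


open scoped Classical in
/-- Weight function on edges: `1` on node edges, `0` otherwise. -/
noncomputable def nodeWeight {V W : Type} {G : SimpleGraph V} {H : SimpleGraph W}
    (η : Expansion G H) : Sym2 V → ZMod 2 :=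
  fun e => if ∃ w : W, e ∈ (η.node w).edgeSet then 1 else 0

open scoped Classical in
lemma nodeWeight_pos {V W : Type} {G : SimpleGraph V} {H : SimpleGraph W}
    {η : Expansion G H} {e : Sym2 V} (hE : ∃ w : W, e ∈ (η.node w).edgeSet) :
    nodeWeight η e = 1 := by
  unfold nodeWeight
  exact if_pos hE

open scoped Classical in
lemma nodeWeight_neg {V W : Type} {G : SimpleGraph V} {H : SimpleGraph W}
    {η : Expansion G H} {e : Sym2 V} (hE : ¬ ∃ w : W, e ∈ (η.node w).edgeSet) :
    nodeWeight η e = 0 := by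
  unfold nodeWeight
  exact if_neg hE

open scoped Classical in
lemma even_filter_iff {V W : Type} {G : SimpleGraph V} {H : SimpleGraph W}
    (η : Expansion G H) {a b : V} (p : η.unionGraph.Walk a b) :
    Even ((p.edges.filter (fun e => ∃ w : W, e ∈ (η.node w).edgeSet)).length) ↔
      ExpansionAux.wsum (nodeWeight η) p = 0 := by
  rw [even_iff_two_dvd, ← ZMod.natCast_eq_zero_iff,
    ExpansionAux.filter_length_cast]
  exact Iff.rfl

open scoped Classical in
/-- For an `H`-expansion `η` in `G`, the following are equivalent: (1) there is a
2-coloring of `∪η` that is proper on each node and makes every edge of `η`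
monochromatic; (2) every cycle in `∪η` has an even number of edges lying in the
nodes of `η`. -/
theorem expansion_coloring_iff_even_node_edges {V W : Type} [Fintype V]
    (G : SimpleGraph V) (H : SimpleGraph W) (η : Expansion G H) :
    (∃ c : V → Fin 2,
      (∀ w : W, ∀ ⦃u v : V⦄, (η.node w).Adj u v → c u ≠ c v) ∧
      (∀ ⦃a b : W⦄ (h : H.Adj a b), c (η.eFun h).1 = c (η.eFun h).2)) ↔
    (∀ (u : V) (C : η.unionGraph.Walk u u), C.IsCycle →
      Even ((C.edges.filter
        (fun e => ∃ w : W, e ∈ (η.node w).edgeSet)).length)) := by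
  classical
  open SimpleGraph in
  constructor
  · rintro ⟨c, hc1, hc2⟩ u C _
    rw [even_filter_iff]
    have hedge : ∀ ⦃a b : V⦄, η.unionGraph.Adj a b →
        nodeWeight η s(a, b) = ((c a).val : ZMod 2) + ((c b).val : ZMod 2) := by
      intro a b hab
      by_cases hE : ∃ w : W, s(a, b) ∈ (η.node w).edgeSet
      · obtain ⟨w, hw⟩ := hE
        rw [nodeWeight_pos ⟨w, hw⟩]
        refine (ExpansionAux.fin2_add_of_ne (hc1 w ?_)).symm
        exact (SimpleGraph.Subgraph.mem_edgeSet).mp hw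
      · rw [nodeWeight_neg hE]
        have hab' : (∃ w, (η.node w).Adj a b) ∨
            (∃ (a' b' : W) (h : H.Adj a' b'), (a, b) = η.eFun h ∨ (b, a) = η.eFun h) := hab
        rcases hab' with ⟨w, hadj⟩ | ⟨a', b', h', hcase | hcase⟩
        · exact absurd ⟨w, (SimpleGraph.Subgraph.mem_edgeSet).mpr hadj⟩ hE
        · have h1 : a = (η.eFun h').1 := by rw [← hcase]
          have h2 : b = (η.eFun h').2 := by rw [← hcase]
          have h3 := hc2 h'
          rw [← h1, ← h2] at h3
          exact (ExpansionAux.fin2_add_of_eq h3).symm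
        · have h1 : b = (η.eFun h').1 := by rw [← hcase]
          have h2 : a = (η.eFun h').2 := by rw [← hcase]
          have h3 := hc2 h'
          rw [← h1, ← h2] at h3
          exact (ExpansionAux.fin2_add_of_eq h3.symm).symm
    have tel : ∀ (a b : V) (p : η.unionGraph.Walk a b),
        ExpansionAux.wsum (nodeWeight η) p
          = ((c a).val : ZMod 2) + ((c b).val : ZMod 2) := by
      intro a b p
      induction p with
      | nil => exact (ExpansionAux.fin2_add_of_eq rfl).symm
      | @cons a' b' c' h q ihq =>
        rw [ExpansionAux.wsum_cons, hedge h, ihq]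
        linear_combination ExpansionAux.fin2_add_of_eq (rfl : c b' = c b')
    rw [tel u u C]
    exact ExpansionAux.fin2_add_of_eq rfl
  · intro hcyc
    have hcycle0 : ∀ (u : V) (p : η.unionGraph.Walk u u), p.IsCycle →
        ExpansionAux.wsum (nodeWeight η) p = 0 :=
      fun u p hp => (even_filter_iff η p).mp (hcyc u p hp)
    have hclosed : ∀ (u : V) (p : η.unionGraph.Walk u u),
        ExpansionAux.wsum (nodeWeight η) p = 0 :=
      fun u p => ExpansionAux.closed_wsum_zero (nodeWeight η) hcycle0 p.length u p rfl
    have hre : ∀ v : V, η.unionGraph.Reachable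
        ((η.unionGraph.connectedComponentMk v).out) v :=
      fun v => SimpleGraph.ConnectedComponent.exact (Quot.out_eq _)
    have hrep : ∀ ⦃u v : V⦄, η.unionGraph.Adj u v →
        (η.unionGraph.connectedComponentMk u).out
          = (η.unionGraph.connectedComponentMk v).out :=
      fun u v h => congrArg Quot.out (SimpleGraph.ConnectedComponent.sound h.reachable)
    have step : ∀ ⦃u v : V⦄, η.unionGraph.Adj u v →
        ExpansionAux.wsum (nodeWeight η) (hre v).some
          = ExpansionAux.wsum (nodeWeight η) (hre u).some + nodeWeight η s(u, v) :=
      fun u v h => ExpansionAux.step_lemma (nodeWeight η) hclosed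
        (fun v => (η.unionGraph.connectedComponentMk v).out) hre hrep h
    refine ⟨fun v => if ExpansionAux.wsum (nodeWeight η) (hre v).some = 0 then 0 else 1,
      ?_, ?_⟩
    · intro w u v hadj hcc
      have hadj' : η.unionGraph.Adj u v := Or.inl ⟨w, hadj⟩
      have h1 : nodeWeight η s(u, v) = 1 :=
        nodeWeight_pos ⟨w, (SimpleGraph.Subgraph.mem_edgeSet).mpr hadj⟩
      have h2 := step hadj'
      rw [h1] at h2
      simp only [] at hcc
      rw [ExpansionAux.zmod2_if_eq_iff] at hcc
      exact ExpansionAux.zmod2_ne_add_one _ (hcc.trans h2)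
    · intro a b hab
      have hne : a ≠ b := hab.ne
      have hadj' : η.unionGraph.Adj (η.eFun hab).1 (η.eFun hab).2 :=
        Or.inr ⟨a, b, hab, Or.inl rfl⟩
      have h0 : nodeWeight η s((η.eFun hab).1, (η.eFun hab).2) = 0 := by
        apply nodeWeight_neg
        rintro ⟨w, hw⟩
        have hadjw := (SimpleGraph.Subgraph.mem_edgeSet).mp hw
        have hwa : w = a := by
          by_contra hne'
          exact Set.disjoint_left.mp (η.node_disj hne') hadjw.fst_mem
            (η.eFun_mem_fst hab)
        have hwb : w = b := by
          by_contra hne'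
          exact Set.disjoint_left.mp (η.node_disj hne') hadjw.snd_mem
            (η.eFun_mem_snd hab)
        exact hne (hwa ▸ hwb ▸ rfl)
      have h2 := step hadj'
      rw [h0, add_zero] at h2
      simp only []
      rw [ExpansionAux.zmod2_if_eq_iff]
      exact h2.symm
end

section
/- Bipartite treewidth is monotone under odd-minors: if H is an odd-minor of G, then btw(H) ≤ btw(G). -/
/-- `H` is an odd-minor of `G` if `H` can be obtained from a subgraph of `G` by
contracting every edge of an edge cut of that subgraph. -/
def IsOddMinor {W V : Type} (H : SimpleGraph W) (G : SimpleGraph V) : Prop :=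
  ∃ (s : Set V) (G' : SimpleGraph s) (A : Set s),
    (∀ u v : s, G'.Adj u v → G.Adj u v) ∧
    Nonempty (H ≃g contractBy G' (cutSubgraph G' A))



open SimpleGraph

variable {ι : Type}

/-- From connectivity of an induced subgraph, extract a walk staying in the set. -/
lemma BTW.walk_in_induce {T : SimpleGraph ι} {S : Set ι}
    (h : (T.induce S).Connected) {a b : ι} (ha : a ∈ S) (hb : b ∈ S) :
    ∃ p : T.Walk a b, ∀ z ∈ p.support, z ∈ S := by
  obtain ⟨q⟩ := h.preconnected ⟨a, ha⟩ ⟨b, hb⟩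
  refine ⟨q.map ⟨Subtype.val, fun h => h⟩, ?_⟩
  intro z hz
  rw [SimpleGraph.Walk.support_map] at hz
  obtain ⟨z', _, rfl⟩ := List.mem_map.mp hz
  exact z'.2

/-- Monotonicity: reachability inside a connected induced set transfers to a superset. -/
lemma BTW.reach_mono {T : SimpleGraph ι} {X S : Set ι}
    (hconn : (T.induce X).Connected) (hXS : X ⊆ S) (x y : ↥S)
    (hx : ↑x ∈ X) (hy : ↑y ∈ X) : (T.induce S).Reachable x y := by
  have h := hconn.preconnected ⟨x, hx⟩ ⟨y, hy⟩
  have := h.map (G := T.induce X) (G' := T.induce S)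
    ⟨fun z => ⟨z.1, hXS z.2⟩, fun h => h⟩
  exact this

/-- `a` and `b` are connected by a walk avoiding `t`. -/
def BTW.sbranch (T : SimpleGraph ι) (t a b : ι) : Prop :=
  ∃ p : T.Walk a b, t ∉ p.support

lemma BTW.sbranch.ne_left {T : SimpleGraph ι} {t a b : ι}
    (h : BTW.sbranch T t a b) : a ≠ t := by
  obtain ⟨p, hp⟩ := h
  intro h; subst h; exact hp p.start_mem_support

lemma BTW.sbranch.ne_right {T : SimpleGraph ι} {t a b : ι}
    (h : BTW.sbranch T t a b) : b ≠ t := by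
  obtain ⟨p, hp⟩ := h
  intro h; subst h; exact hp p.end_mem_support

lemma BTW.sbranch.symm {T : SimpleGraph ι} {t a b : ι}
    (h : BTW.sbranch T t a b) : BTW.sbranch T t b a := by
  obtain ⟨p, hp⟩ := h
  exact ⟨p.reverse, by rwa [SimpleGraph.Walk.support_reverse, List.mem_reverse]⟩

lemma BTW.sbranch.trans {T : SimpleGraph ι} {t a b c : ι}
    (h : BTW.sbranch T t a b) (h' : BTW.sbranch T t b c) : BTW.sbranch T t a c := by
  obtain ⟨p, hp⟩ := h
  obtain ⟨q, hq⟩ := h'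
  refine ⟨p.append q, ?_⟩
  rw [SimpleGraph.Walk.mem_support_append_iff]
  tauto

/-- Two elements of a connected induced set avoiding `t` are in the same branch. -/
lemma BTW.sbranch_of_connected_set {T : SimpleGraph ι} {S : Set ι} {t a b : ι}
    (h : (T.induce S).Connected) (ht : t ∉ S) (ha : a ∈ S) (hb : b ∈ S) :
    BTW.sbranch T t a b := by
  obtain ⟨p, hp⟩ := BTW.walk_in_induce h ha hb
  exact ⟨p, fun hmem => ht (hp t hmem)⟩

/-- In a tree, the neighbor of `t` in a given branch is unique. -/
lemma BTW.branch_unique {T : SimpleGraph ι} (hT : T.IsTree) {t b b' : ι}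
    (hb : T.Adj t b) (hb' : T.Adj t b') (h : BTW.sbranch T t b b') : b = b' := by
  classical
  obtain ⟨p, hp⟩ := h
  have hbp : t ∉ p.bypass.support := fun hm => hp (p.support_bypass_subset hm)
  have key := hT.IsAcyclic.path_unique (SimpleGraph.Path.singleton hb')
    ⟨SimpleGraph.Walk.cons hb p.bypass, SimpleGraph.Walk.IsPath.cons p.bypass_isPath hbp⟩
  have hlen := congrArg (fun q : T.Path t b' => (q : T.Walk t b').length) key
  simp only [SimpleGraph.Path.singleton, SimpleGraph.Walk.length_cons,
    SimpleGraph.Walk.length_nil] at hlen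
  exact SimpleGraph.Walk.eq_of_length_eq_zero (p := p.bypass) (by omega)

/-- Every vertex `a ≠ t` lies in the branch of a unique neighbor of `t`. -/
lemma BTW.branch_exists {T : SimpleGraph ι} (hT : T.IsTree) {t a : ι} (ha : a ≠ t) :
    ∃ b, T.Adj t b ∧ BTW.sbranch T t b a := by
  classical
  obtain ⟨q⟩ := hT.isConnected.preconnected t a
  have hq : q.toPath.val.IsPath := q.toPath.2
  rcases hP : (q.toPath : T.Walk t a) with _ | @⟨_, c, _, hadj, p'⟩
  · exact absurd rfl (Ne.symm ha)
  · rw [hP] at hq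
    rw [SimpleGraph.Walk.cons_isPath_iff] at hq
    exact ⟨c, hadj, ⟨p', hq.2⟩⟩


section B
variable {V : Type} {G : SimpleGraph V} (D : BipTreeDecomp G)

/-- Two bags containing a vertex outside the bag of `t` are in the same branch at `t`. -/
lemma BTW.sb_supp {v : V} {t a b : D.ι} (hv : v ∉ D.α t ∪ D.β t)
    (ha : v ∈ D.α a ∪ D.β a) (hb : v ∈ D.α b ∪ D.β b) :
    BTW.sbranch D.T t a b :=
  BTW.sbranch_of_connected_set (D.support_connected v) hv ha hb

/-- Entry lemma: if `u` is in the bag of `t`, `v` is not, `u ~ v`, and the support of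
`v` lies in the branch of the neighbor `b`, then `u` is in the bag of `b`. -/
lemma BTW.entry {u v : V} {t b x₀ : D.ι} (hadj : G.Adj u v)
    (hu : u ∈ D.α t ∪ D.β t) (hv : v ∉ D.α t ∪ D.β t)
    (hb : D.T.Adj t b) (hx₀ : v ∈ D.α x₀ ∪ D.β x₀) (hsb : BTW.sbranch D.T t b x₀) :
    u ∈ D.α b ∪ D.β b := by
  classical
  obtain ⟨ts, huts, hvts⟩ := D.edge_bag hadj
  have htsne : ts ≠ t := fun h => hv (h ▸ hvts)
  obtain ⟨p, hp⟩ := BTW.walk_in_induce (D.support_connected u) hu huts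
  have hbp : ∀ z ∈ p.bypass.support, z ∈ {t' | u ∈ D.α t' ∪ D.β t'} :=
    fun z hz => hp z (p.support_bypass_subset hz)
  have hbpath := p.bypass_isPath
  rcases hP : p.bypass with _ | @⟨_, c, _, hadj', p'⟩
  · exact absurd rfl htsne.symm
  · rw [hP] at hbpath hbp
    rw [SimpleGraph.Walk.cons_isPath_iff] at hbpath
    have hc : u ∈ D.α c ∪ D.β c := hbp c (by simp)
    have hsb1 : BTW.sbranch D.T t c ts := ⟨p', hbpath.2⟩
    have hsb2 : BTW.sbranch D.T t ts x₀ := BTW.sb_supp D hv hvts hx₀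
    have : c = b := BTW.branch_unique D.tree hadj' hb (hsb1.trans hsb2 |>.trans hsb.symm)
    exact this ▸ hc

end B

section C
variable {V : Type} {G : SimpleGraph V} (D : BipTreeDecomp G) {s : Set V}
  (G' : SimpleGraph s) (A : Set s)

/-- Walking along the contracted subgraph, bags of walk vertices are all reachable
in the induced subgraph on any set `S` containing all relevant bags. -/
lemma BTW.reach_walk (hsub : ∀ u v : s, G'.Adj u v → G.Adj u v)
    {a b : ↥s} (p : (cutSubgraph G' A).Walk a b) {S : Set D.ι}
    (hS : ∀ z ∈ p.support, ∀ t', (z : V) ∈ D.α t' ∪ D.β t' → t' ∈ S) :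
    ∀ (ta tb : ↥S), (a : V) ∈ D.α ↑ta ∪ D.β ↑ta → (b : V) ∈ D.α ↑tb ∪ D.β ↑tb →
      (D.T.induce S).Reachable ta tb := by
  induction p with
  | nil =>
    intro ta tb hta htb
    exact BTW.reach_mono (D.support_connected _)
      (fun t' ht' => hS _ (SimpleGraph.Walk.start_mem_support _) t' ht') ta tb hta htb
  | @cons a a₁ b h p ih =>
    intro ta tb hta htb
    have hS' : ∀ z ∈ p.support, ∀ t', (z : V) ∈ D.α t' ∪ D.β t' → t' ∈ S :=
      fun z hz => hS z (by rw [SimpleGraph.Walk.support_cons]; exact List.mem_cons_of_mem _ hz)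
    obtain ⟨ts, h1, h2⟩ := D.edge_bag (hsub _ _ h.1)
    have hts : ts ∈ S := hS a (SimpleGraph.Walk.start_mem_support _) ts h1
    have r1 : (D.T.induce S).Reachable ta ⟨ts, hts⟩ :=
      BTW.reach_mono (D.support_connected (a : V))
        (fun t' ht' => hS a (SimpleGraph.Walk.start_mem_support _) t' ht') ta ⟨ts, hts⟩ hta h1
    exact r1.trans (ih hS' ⟨ts, hts⟩ tb h2 htb)

variable (t : D.ι) (CC : (G.induce (D.β t)).Coloring (Fin 2))

open Classical in
/-- The parity function: color in the bipartition of `G[β t]` shifted by membership in `A`. -/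
noncomputable def BTW.sigma : ↥s → ZMod 2 := fun u =>
  (if h : (u : V) ∈ D.β t then ((CC ⟨↑u, h⟩).val : ZMod 2) else 0) +
  (if u ∈ A then 1 else 0)

lemma BTW.sigma_cutAdj (hsub : ∀ u v : s, G'.Adj u v → G.Adj u v) {a b : ↥s}
    (h : (cutSubgraph G' A).Adj a b) (ha : (a : V) ∈ D.β t) (hb : (b : V) ∈ D.β t) :
    BTW.sigma D A t CC a = BTW.sigma D A t CC b := by
  classical
  have hG : G.Adj ↑a ↑b := hsub _ _ h.1
  have hcc : CC ⟨↑a, ha⟩ ≠ CC ⟨↑b, hb⟩ := CC.valid hG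
  have key : ∀ x y : Fin 2, x ≠ y → ((x.val : ZMod 2) + 1 = (y.val : ZMod 2) + 0 ∧
      (x.val : ZMod 2) + 0 = (y.val : ZMod 2) + 1) := by decide
  unfold BTW.sigma
  rw [dif_pos ha, dif_pos hb]
  rcases h.2 with ⟨hA, hB⟩ | ⟨hA, hB⟩
  · rw [if_pos hA, if_neg hB]; exact (key _ _ hcc).1
  · rw [if_neg hA, if_pos hB]; exact (key _ _ hcc).2

lemma BTW.sigma_flip {a b : ↥s} (hG : G.Adj ↑a ↑b)
    (ha : (a : V) ∈ D.β t) (hb : (b : V) ∈ D.β t) (hiff : a ∈ A ↔ b ∈ A) :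
    BTW.sigma D A t CC a ≠ BTW.sigma D A t CC b := by
  classical
  have hcc : CC ⟨↑a, ha⟩ ≠ CC ⟨↑b, hb⟩ := CC.valid hG
  have key : ∀ x y : Fin 2, x ≠ y → ∀ c d : ZMod 2, c = d →
      (x.val : ZMod 2) + c ≠ (y.val : ZMod 2) + d := by decide
  unfold BTW.sigma
  rw [dif_pos ha, dif_pos hb]
  refine key _ _ hcc _ _ ?_
  by_cases hA : a ∈ A
  · rw [if_pos hA, if_pos (hiff.mp hA)]
  · rw [if_neg hA, if_neg (fun hc => hA (hiff.mpr hc))]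

/-- Main parity/excursion lemma, by induction along a walk in the cut subgraph. -/
lemma BTW.main_parity (hsub : ∀ u v : s, G'.Adj u v → G.Adj u v)
    {y x : ↥s} (p : (cutSubgraph G' A).Walk y x) :
    (∀ z ∈ p.support, (z : V) ∉ D.α t) → ((x : V) ∈ D.β t) →
    (((y : V) ∈ D.β t → BTW.sigma D A t CC y = BTW.sigma D A t CC x) ∧
     ((y : V) ∉ D.α t ∪ D.β t → ∀ b, D.T.Adj t b →
        (∃ x₀, (y : V) ∈ D.α x₀ ∪ D.β x₀ ∧ BTW.sbranch D.T t b x₀) →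
        ∃ z ∈ p.support, (z : V) ∈ D.β t ∧ (z : V) ∈ D.α b ∪ D.β b ∧
          BTW.sigma D A t CC z = BTW.sigma D A t CC x)) := by
  induction p with
  | nil =>
    intro _ hx
    refine ⟨fun _ => rfl, fun hybag => absurd (Or.inr hx) hybag⟩
  | @cons y y₁ x h p ih =>
    intro hsup hx
    have hsup' : ∀ z ∈ p.support, (z : V) ∉ D.α t :=
      fun z hz => hsup z (by rw [SimpleGraph.Walk.support_cons]; exact List.mem_cons_of_mem _ hz)
    have hyα : (y : V) ∉ D.α t := hsup y (SimpleGraph.Walk.start_mem_support _)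
    have hy₁α : (y₁ : V) ∉ D.α t := hsup' y₁ (SimpleGraph.Walk.start_mem_support _)
    have IH := ih hsup' hx
    constructor
    · intro hyβ
      by_cases hy₁β : (y₁ : V) ∈ D.β t
      · exact (BTW.sigma_cutAdj D G' A t CC hsub h hyβ hy₁β).trans (IH.1 hy₁β)
      · have hy₁bag : (y₁ : V) ∉ D.α t ∪ D.β t := fun hc => hc.elim hy₁α hy₁β
        obtain ⟨x₀, hx₀⟩ := D.mem_bag ↑y₁
        have hx₀ne : x₀ ≠ t := fun hh => hy₁bag (hh ▸ hx₀)
        obtain ⟨b, hbadj, hsb⟩ := BTW.branch_exists D.tree hx₀ne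
        obtain ⟨z, hzmem, hzβ, hzb, hzσ⟩ := IH.2 hy₁bag b hbadj ⟨x₀, hx₀, hsb⟩
        have hyb : (y : V) ∈ D.α b ∪ D.β b :=
          BTW.entry D (hsub _ _ h.1) (Or.inr hyβ) hy₁bag hbadj hx₀ hsb
        have hyz : y = z := Subtype.ext (D.adhesion hbadj ⟨hyb, hyβ⟩ ⟨hzb, hzβ⟩)
        rw [hyz]; exact hzσ
    · intro hybag b hbadj hex
      obtain ⟨x₀, hx₀, hsb⟩ := hex
      by_cases hy₁β : (y₁ : V) ∈ D.β t
      · have hy₁b : (y₁ : V) ∈ D.α b ∪ D.β b :=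
          BTW.entry D (hsub _ _ h.1).symm (Or.inr hy₁β) hybag hbadj hx₀ hsb
        have hmem : y₁ ∈ (SimpleGraph.Walk.cons h p).support := by
          rw [SimpleGraph.Walk.support_cons]
          exact List.mem_cons_of_mem _ (SimpleGraph.Walk.start_mem_support _)
        exact ⟨y₁, hmem, hy₁β, hy₁b, IH.1 hy₁β⟩
      · have hy₁bag : (y₁ : V) ∉ D.α t ∪ D.β t := fun hc => hc.elim hy₁α hy₁β
        obtain ⟨ts, hyts, hy₁ts⟩ := D.edge_bag (hsub _ _ h.1)
        have hsb2 : BTW.sbranch D.T t x₀ ts := BTW.sb_supp D hybag hx₀ hyts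
        obtain ⟨z, hzmem, hrest⟩ := IH.2 hy₁bag b hbadj ⟨ts, hy₁ts, hsb.trans hsb2⟩
        have hmem : z ∈ (SimpleGraph.Walk.cons h p).support := by
          rw [SimpleGraph.Walk.support_cons]
          exact List.mem_cons_of_mem _ hzmem
        exact ⟨z, hmem, hrest⟩

end C

section D
open SimpleGraph
variable {W V : Type} {H : SimpleGraph W} {G : SimpleGraph V} (D : BipTreeDecomp G)
  {s : Set V} (G' : SimpleGraph s) (A : Set s)
  (iso : H ≃g contractBy G' (cutSubgraph G' A))

/-- Apex bags of the lifted decomposition. -/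
def BTW.alphaL (t : D.ι) : Set W :=
  {w | ∃ u : ↥s, (cutSubgraph G' A).connectedComponentMk u = iso w ∧ (u : V) ∈ D.α t}

/-- Bipartite bags of the lifted decomposition. -/
def BTW.betaL (t : D.ι) : Set W :=
  {w | (∃ u : ↥s, (cutSubgraph G' A).connectedComponentMk u = iso w ∧ (u : V) ∈ D.β t) ∧
    ∀ u : ↥s, (cutSubgraph G' A).connectedComponentMk u = iso w → (u : V) ∉ D.α t}

lemma BTW.memUnion {t : D.ι} {w : W} {u : ↥s}
    (hmk : (cutSubgraph G' A).connectedComponentMk u = iso w)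
    (hbag : (u : V) ∈ D.α t ∪ D.β t) :
    w ∈ BTW.alphaL D G' A iso t ∪ BTW.betaL D G' A iso t := by
  by_cases hα : ∃ u' : ↥s, (cutSubgraph G' A).connectedComponentMk u' = iso w ∧
      (u' : V) ∈ D.α t
  · exact Or.inl hα
  · refine Or.inr ⟨?_, fun u' h hc => hα ⟨u', h, hc⟩⟩
    rcases hbag with hb | hb
    · exact absurd ⟨u, hmk, hb⟩ hα
    · exact ⟨u, hmk, hb⟩

lemma BTW.memBagOf {t : D.ι} {w : W}
    (h : w ∈ BTW.alphaL D G' A iso t ∪ BTW.betaL D G' A iso t) :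
    ∃ u : ↥s, (cutSubgraph G' A).connectedComponentMk u = iso w ∧
      (u : V) ∈ D.α t ∪ D.β t := by
  rcases h with ⟨u, h1, h2⟩ | ⟨⟨u, h1, h2⟩, -⟩
  · exact ⟨u, h1, Or.inl h2⟩
  · exact ⟨u, h1, Or.inr h2⟩

lemma BTW.walk_comp {u z : ↥s} (p : (cutSubgraph G' A).Walk u z) {c}
    (hu : (cutSubgraph G' A).connectedComponentMk u = c) :
    (cutSubgraph G' A).connectedComponentMk z = c := by
  classical
  rw [← hu]
  exact (SimpleGraph.ConnectedComponent.sound ⟨p⟩).symm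

lemma BTW.mem_bagL (w : W) :
    ∃ t, w ∈ BTW.alphaL D G' A iso t ∪ BTW.betaL D G' A iso t := by
  obtain ⟨u, hu⟩ := Quot.exists_rep (iso w)
  obtain ⟨t, ht⟩ := D.mem_bag ↑u
  exact ⟨t, BTW.memUnion D G' A iso hu ht⟩

lemma BTW.edge_bagL (hsub : ∀ u v : s, G'.Adj u v → G.Adj u v) ⦃w w' : W⦄
    (hadj : H.Adj w w') :
    ∃ t, w ∈ BTW.alphaL D G' A iso t ∪ BTW.betaL D G' A iso t ∧
      w' ∈ BTW.alphaL D G' A iso t ∪ BTW.betaL D G' A iso t := by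
  obtain ⟨hne, u, v, hG'uv, hmku, hmkv⟩ := iso.map_adj_iff.mpr hadj
  obtain ⟨t, h1, h2⟩ := D.edge_bag (hsub _ _ hG'uv)
  exact ⟨t, BTW.memUnion D G' A iso hmku h1, BTW.memUnion D G' A iso hmkv h2⟩

lemma BTW.supportL (hsub : ∀ u v : s, G'.Adj u v → G.Adj u v) (w : W) :
    (D.T.induce {t : D.ι | w ∈ BTW.alphaL D G' A iso t ∪ BTW.betaL D G' A iso t}).Connected := by
  set S := {t : D.ι | w ∈ BTW.alphaL D G' A iso t ∪ BTW.betaL D G' A iso t} with hS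
  have hkey : ∀ (z : ↥s), (cutSubgraph G' A).connectedComponentMk z = iso w →
      ∀ t', (z : V) ∈ D.α t' ∪ D.β t' → t' ∈ S :=
    fun z hz t' h => BTW.memUnion D G' A iso hz h
  classical
  haveI hne : Nonempty ↥S := by
    obtain ⟨t, ht⟩ := BTW.mem_bagL D G' A iso w
    exact ⟨⟨t, ht⟩⟩
  refine ⟨fun x y => ?_⟩
  obtain ⟨ux, hmkx, hbagx⟩ := BTW.memBagOf D G' A iso x.2
  obtain ⟨uy, hmky, hbagy⟩ := BTW.memBagOf D G' A iso y.2
  obtain ⟨p⟩ := SimpleGraph.ConnectedComponent.eq.mp (hmkx.trans hmky.symm)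
  refine BTW.reach_walk D G' A hsub p ?_ x y hbagx hbagy
  intro z hz t' ht'
  exact hkey z (BTW.walk_comp G' A (p.takeUntil z hz) hmkx) t' ht'

lemma BTW.apexL (t : D.ι) :
    BTW.alphaL D G' A iso t ∩ BTW.betaL D G' A iso t = ∅ := by
  ext w
  simp only [Set.mem_inter_iff, Set.mem_empty_iff_false, iff_false]
  rintro ⟨⟨u, hmk, hα⟩, -, hforall⟩
  exact hforall u hmk hα

lemma BTW.nocross (hsub : ∀ u v : s, G'.Adj u v → G.Adj u v) (t : D.ι) {w w' : W}
    (hne : (iso w : (cutSubgraph G' A).ConnectedComponent) ≠ iso w')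
    (hw : w ∈ BTW.betaL D G' A iso t) (hw' : w' ∈ BTW.betaL D G' A iso t)
    {u₀ v₀ : ↥s} (hG'uv : G'.Adj u₀ v₀)
    (hmku : (cutSubgraph G' A).connectedComponentMk u₀ = iso w)
    (hmkv : (cutSubgraph G' A).connectedComponentMk v₀ = iso w')
    (hv₀ : (v₀ : V) ∉ D.α t ∪ D.β t) : False := by
  classical
  obtain ⟨CC⟩ := D.beta_bipartite t
  obtain ⟨u', hmku', hu'β⟩ := hw'.1
  obtain ⟨p2⟩ := SimpleGraph.ConnectedComponent.eq.mp (hmkv.trans hmku'.symm)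
  have hsupal2 : ∀ z ∈ p2.support, (z : V) ∉ D.α t := fun z hz =>
    hw'.2 z (BTW.walk_comp G' A (p2.takeUntil z hz) hmkv)
  obtain ⟨x₀, hx₀⟩ := D.mem_bag ↑v₀
  have hx₀ne : x₀ ≠ t := fun hh => hv₀ (hh ▸ hx₀)
  obtain ⟨b, hbadj, hsb⟩ := BTW.branch_exists D.tree hx₀ne
  obtain ⟨z₂, hz₂mem, hz₂β, hz₂b, -⟩ :=
    (BTW.main_parity D G' A t CC hsub p2 hsupal2 hu'β).2 hv₀ b hbadj ⟨x₀, hx₀, hsb⟩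
  have hz₂w' : (cutSubgraph G' A).connectedComponentMk z₂ = iso w' :=
    BTW.walk_comp G' A (p2.takeUntil z₂ hz₂mem) hmkv
  have hu₀α : (u₀ : V) ∉ D.α t := hw.2 u₀ hmku
  by_cases hu₀β : (u₀ : V) ∈ D.β t
  · have hub : (u₀ : V) ∈ D.α b ∪ D.β b :=
      BTW.entry D (hsub _ _ hG'uv) (Or.inr hu₀β) hv₀ hbadj hx₀ hsb
    have heq : (u₀ : V) = ↑z₂ := D.adhesion hbadj ⟨hub, hu₀β⟩ ⟨hz₂b, hz₂β⟩
    exact hne (by rw [← hmku, ← hz₂w', Subtype.ext heq])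
  · have hu₀bag : (u₀ : V) ∉ D.α t ∪ D.β t := fun hc => hc.elim hu₀α hu₀β
    obtain ⟨uw, hmkuw, huwβ⟩ := hw.1
    obtain ⟨p1⟩ := SimpleGraph.ConnectedComponent.eq.mp (hmku.trans hmkuw.symm)
    have hsupal1 : ∀ z ∈ p1.support, (z : V) ∉ D.α t := fun z hz =>
      hw.2 z (BTW.walk_comp G' A (p1.takeUntil z hz) hmku)
    obtain ⟨ts, h1ts, h2ts⟩ := D.edge_bag (hsub _ _ hG'uv)
    have hsb2 : BTW.sbranch D.T t x₀ ts := BTW.sb_supp D hv₀ hx₀ h2ts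
    obtain ⟨z₁, hz₁mem, hz₁β, hz₁b, -⟩ :=
      (BTW.main_parity D G' A t CC hsub p1 hsupal1 huwβ).2 hu₀bag b hbadj
        ⟨ts, h1ts, hsb.trans hsb2⟩
    have heq : (z₁ : V) = ↑z₂ := D.adhesion hbadj ⟨hz₁b, hz₁β⟩ ⟨hz₂b, hz₂β⟩
    have hz₁w : (cutSubgraph G' A).connectedComponentMk z₁ = iso w :=
      BTW.walk_comp G' A (p1.takeUntil z₁ hz₁mem) hmku
    exact hne (by rw [← hz₁w, ← hz₂w', Subtype.ext heq])

lemma BTW.properL (hsub : ∀ u v : s, G'.Adj u v → G.Adj u v) (t : D.ι)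
    (CC : (G.induce (D.β t)).Coloring (Fin 2)) {w w' : W}
    (hw : w ∈ BTW.betaL D G' A iso t) (hw' : w' ∈ BTW.betaL D G' A iso t)
    (hadj : H.Adj w w') {u u' : ↥s}
    (hu : (cutSubgraph G' A).connectedComponentMk u = iso w) (huβ : (u : V) ∈ D.β t)
    (hu' : (cutSubgraph G' A).connectedComponentMk u' = iso w') (hu'β : (u' : V) ∈ D.β t) :
    BTW.sigma D A t CC u ≠ BTW.sigma D A t CC u' := by
  classical
  obtain ⟨hne, u₀, v₀, hG'uv, hmku₀, hmkv₀⟩ := iso.map_adj_iff.mpr hadj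
  have hncross : (u₀ ∈ A ↔ v₀ ∈ A) := by
    by_contra hc'
    have hK : (cutSubgraph G' A).Adj u₀ v₀ := ⟨hG'uv, by tauto⟩
    exact hne (by rw [← hmku₀, ← hmkv₀,
      SimpleGraph.ConnectedComponent.sound hK.reachable])
  have hu₀α : (u₀ : V) ∉ D.α t := hw.2 u₀ hmku₀
  have hv₀α : (v₀ : V) ∉ D.α t := hw'.2 v₀ hmkv₀
  by_cases hv₀β : (v₀ : V) ∈ D.β t
  · by_cases hu₀β : (u₀ : V) ∈ D.β t
    · obtain ⟨p1⟩ := SimpleGraph.ConnectedComponent.eq.mp (hmku₀.trans hu.symm)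
      obtain ⟨p2⟩ := SimpleGraph.ConnectedComponent.eq.mp (hmkv₀.trans hu'.symm)
      have hsupal1 : ∀ z ∈ p1.support, (z : V) ∉ D.α t := fun z hz =>
        hw.2 z (BTW.walk_comp G' A (p1.takeUntil z hz) hmku₀)
      have hsupal2 : ∀ z ∈ p2.support, (z : V) ∉ D.α t := fun z hz =>
        hw'.2 z (BTW.walk_comp G' A (p2.takeUntil z hz) hmkv₀)
      have e1 : BTW.sigma D A t CC u₀ = BTW.sigma D A t CC u :=
        (BTW.main_parity D G' A t CC hsub p1 hsupal1 huβ).1 hu₀β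
      have e2 : BTW.sigma D A t CC v₀ = BTW.sigma D A t CC u' :=
        (BTW.main_parity D G' A t CC hsub p2 hsupal2 hu'β).1 hv₀β
      rw [← e1, ← e2]
      exact BTW.sigma_flip D A t CC (hsub _ _ hG'uv) hu₀β hv₀β hncross
    · have hu₀bag : (u₀ : V) ∉ D.α t ∪ D.β t := fun hc => hc.elim hu₀α hu₀β
      exact absurd (BTW.nocross D G' A iso hsub t (Ne.symm hne) hw' hw hG'uv.symm
        hmkv₀ hmku₀ hu₀bag) not_false
  · have hv₀bag : (v₀ : V) ∉ D.α t ∪ D.β t := fun hc => hc.elim hv₀α hv₀β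
    exact absurd (BTW.nocross D G' A iso hsub t hne hw hw' hG'uv
      hmku₀ hmkv₀ hv₀bag) not_false

lemma BTW.betaBipL (hsub : ∀ u v : s, G'.Adj u v → G.Adj u v) (t : D.ι) :
    (H.induce (BTW.betaL D G' A iso t)).Colorable 2 := by
  classical
  obtain ⟨CC⟩ := D.beta_bipartite t
  have col : (H.induce (BTW.betaL D G' A iso t)).Coloring (ZMod 2) := by
    refine SimpleGraph.Coloring.mk
      (fun w => BTW.sigma D A t CC w.2.1.choose) ?_
    intro a b hadj
    have hadj' : H.Adj ↑a ↑b := hadj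
    exact BTW.properL D G' A iso hsub t CC a.2 b.2 hadj'
      a.2.1.choose_spec.1 a.2.1.choose_spec.2 b.2.1.choose_spec.1 b.2.1.choose_spec.2
  have := col.colorable
  rwa [ZMod.card] at this

lemma BTW.adhesionL (hsub : ∀ u v : s, G'.Adj u v → G.Adj u v) ⦃t t' : D.ι⦄
    (hadj : D.T.Adj t t') :
    (((BTW.alphaL D G' A iso t' ∪ BTW.betaL D G' A iso t') ∩
      BTW.betaL D G' A iso t)).Subsingleton := by
  classical
  obtain ⟨CC⟩ := D.beta_bipartite t
  have key : ∀ w, w ∈ BTW.alphaL D G' A iso t' ∪ BTW.betaL D G' A iso t' →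
      w ∈ BTW.betaL D G' A iso t →
      ∃ z : ↥s, (cutSubgraph G' A).connectedComponentMk z = iso w ∧
        (z : V) ∈ D.β t ∧ (z : V) ∈ D.α t' ∪ D.β t' := by
    intro w hw1 hw2
    obtain ⟨y₀, hmky₀, hy₀bag'⟩ := BTW.memBagOf D G' A iso hw1
    by_cases hy₀ : (y₀ : V) ∈ D.α t ∪ D.β t
    · have hy₀β : (y₀ : V) ∈ D.β t := by
        rcases hy₀ with h | h
        · exact absurd h (hw2.2 y₀ hmky₀)
        · exact h
      exact ⟨y₀, hmky₀, hy₀β, hy₀bag'⟩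
    · obtain ⟨uw, hmkuw, huwβ⟩ := hw2.1
      obtain ⟨p⟩ := SimpleGraph.ConnectedComponent.eq.mp (hmky₀.trans hmkuw.symm)
      have hsupal : ∀ z ∈ p.support, (z : V) ∉ D.α t := fun z hz =>
        hw2.2 z (BTW.walk_comp G' A (p.takeUntil z hz) hmky₀)
      have hsbt' : BTW.sbranch D.T t t' t' := by
        refine ⟨SimpleGraph.Walk.nil, ?_⟩
        simp only [SimpleGraph.Walk.support_nil, List.mem_singleton]
        exact hadj.ne
      obtain ⟨z, hzmem, hzβ, hzb, -⟩ :=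
        (BTW.main_parity D G' A t CC hsub p hsupal huwβ).2 hy₀ t' hadj
          ⟨t', hy₀bag', hsbt'⟩
      exact ⟨z, BTW.walk_comp G' A (p.takeUntil z hzmem) hmky₀, hzβ, hzb⟩
  intro w1 hw1 w2 hw2
  obtain ⟨z1, hz1mk, hz1β, hz1b⟩ := key w1 hw1.1 hw1.2
  obtain ⟨z2, hz2mk, hz2β, hz2b⟩ := key w2 hw2.1 hw2.2
  have heq : (z1 : V) = ↑z2 := D.adhesion hadj ⟨hz1b, hz1β⟩ ⟨hz2b, hz2β⟩
  have : iso w1 = iso w2 := by rw [← hz1mk, ← hz2mk, Subtype.ext heq]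
  exact iso.toEquiv.injective this

lemma BTW.widthL [Fintype V] (t : D.ι) :
    (BTW.alphaL D G' A iso t).ncard ≤ (D.α t).ncard := by
  classical
  rcases Set.eq_empty_or_nonempty (BTW.alphaL D G' A iso t) with he | ⟨w₀, hw₀⟩
  · simp [he]
  · obtain ⟨u₀, -, -⟩ := hw₀
    have : Nonempty V := ⟨↑u₀⟩
    refine Set.ncard_le_ncard_of_injOn
      (fun w => if h : w ∈ BTW.alphaL D G' A iso t then ((h.choose : ↥s) : V)
        else Classical.arbitrary V) ?_ ?_ (Set.toFinite _)
    · intro w hw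
      simp only [dif_pos hw]
      exact hw.choose_spec.2
    · intro w1 h1 w2 h2 heq
      simp only [dif_pos h1, dif_pos h2] at heq
      have : iso w1 = iso w2 := by
        rw [← h1.choose_spec.1, ← h2.choose_spec.1, Subtype.ext heq]
      exact iso.toEquiv.injective this

end D

/-- Bipartite treewidth is monotone under odd-minors: if `H` is an odd-minor of `G`,
then `btw(H) ≤ btw(G)`. -/
theorem btw_mono_oddMinor {W V : Type} [Fintype W] [Fintype V]
    (H : SimpleGraph W) (G : SimpleGraph V) (hHG : IsOddMinor H G) (k : ℕ)
    (hG : btwLE G k) : btwLE H k := by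
  obtain ⟨s, G', A, hsub, ⟨iso⟩⟩ := hHG
  obtain ⟨D, hD⟩ := hG
  refine ⟨{
    ι := D.ι
    T := D.T
    tree := D.tree
    α := BTW.alphaL D G' A iso
    β := BTW.betaL D G' A iso
    mem_bag := BTW.mem_bagL D G' A iso
    edge_bag := BTW.edge_bagL D G' A iso hsub
    support_connected := BTW.supportL D G' A iso hsub
    apex_disj := BTW.apexL D G' A iso
    beta_bipartite := BTW.betaBipL D G' A iso hsub
    adhesion := BTW.adhesionL D G' A iso hsub }, ?_⟩
  intro t
  exact le_trans (BTW.widthL D G' A iso t) (hD t)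
end

section
/- Gluing property for clique covers: let t ∈ ℕ, let F and G be two compatible boundaried graphs with common boundary vertices B_F ∩ B_G contained in an annotated set X of F ⊕ G, let w be a vertex-weight function, and let (R, S) be a partition of X (R: forbidden vertices, S: forced vertices). Then the minimum weight of a set S* with S ⊆ S*, S* ∩ R = ∅, and F ⊕ G minus S* containing no K_t subgraph equals the sum of the corresponding minimum weights for F (with annotation restricted to V(F)) and for G (restricted to V(G)), minus w(S ∩ B_F ∩ B_G). -/
open scoped ENNReal

/-- The optimum value of the annotated weighted `K_t`-subgraph cover problem on the
part of the graph `W` induced by the vertex set `U`: the minimum total weight of a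
set `S'` of vertices of `U` that contains every annotated forced vertex (`S ∩ U`),
avoids every annotated forbidden vertex (in `R`), and whose removal from the part of
`W` on `U` leaves a `K_t`-free graph.  The value is `⊤` if no such set exists. -/
noncomputable def ktCoverOpt {V : Type} (t : ℕ) (W : SimpleGraph V) (w : V → ℕ)
    (U R S : Set V) : ℕ∞ :=
  sInf {n : ℕ∞ | ∃ S' : Set V, S' ⊆ U ∧ S ∩ U ⊆ S' ∧ S' ∩ R = ∅ ∧
    (W.induce (U \ S')).CliqueFree t ∧ n = ∑ᶠ v ∈ S', (w v : ℕ∞)}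

/-- `K_t`-freeness of an induced subgraph in terms of cliques of the ambient graph. -/
lemma induce_cliqueFree_iff' {V : Type} (W : SimpleGraph V) (t : ℕ) (A : Set V) :
    (W.induce A).CliqueFree t ↔ ∀ s : Finset V, ↑s ⊆ A → ¬ W.IsNClique t s := by
  constructor
  · intro h s hsA hs
    refine h (s.attach.map ⟨fun x => (⟨x.1, hsA x.2⟩ : A), ?_⟩) ?_
    · intro a b hab
      exact Subtype.ext (by have h' := congrArg (Subtype.val : A → V) hab; exact h')
    constructor
    · intro a ha b hb hab
      simp only [Finset.coe_map, Set.mem_image, Finset.mem_coe, Finset.mem_attach,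
        Function.Embedding.coeFn_mk, Set.mem_range] at ha hb
      obtain ⟨x, -, rfl⟩ := ha
      obtain ⟨y, -, rfl⟩ := hb
      have hxy : (x : V) ≠ (y : V) := fun h' => hab (by simp [Subtype.ext_iff, h'])
      exact hs.1 x.2 y.2 hxy
    · rw [Finset.card_map, Finset.card_attach]; exact hs.2
  · intro h s hs
    refine h (s.map ⟨Subtype.val, Subtype.val_injective⟩) ?_ ?_
    · intro x hx
      simp only [Finset.coe_map, Set.mem_image, Finset.mem_coe,
        Function.Embedding.coeFn_mk] at hx
      obtain ⟨y, -, rfl⟩ := hx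
      exact y.2
    constructor
    · intro a ha b hb hab
      simp only [Finset.coe_map, Set.mem_image, Finset.mem_coe,
        Function.Embedding.coeFn_mk] at ha hb
      obtain ⟨x, hx, rfl⟩ := ha
      obtain ⟨y, hy, rfl⟩ := hb
      exact hs.1 hx hy (fun h' => hab (congrArg Subtype.val h'))
    · rw [Finset.card_map]; exact hs.2

/-- `K_t`-freeness of induced subgraphs is antitone in the vertex set. -/
lemma cliqueFree_induce_mono {V : Type} (W : SimpleGraph V) {t : ℕ} {A B : Set V}
    (h : A ⊆ B) (hB : (W.induce B).CliqueFree t) : (W.induce A).CliqueFree t := by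
  rw [induce_cliqueFree_iff'] at hB ⊢
  exact fun s hsA => hB s (hsA.trans h)

/-- A clique cannot cross a separation: if a `K_t` appears in `A`, then it appears
entirely on one side of the separation. -/
lemma cliqueFree_split {V : Type} (W : SimpleGraph V) {L R' : Set V}
    (hsep : L ∪ R' = Set.univ)
    (hnoedge : ∀ ⦃u v : V⦄, W.Adj u v → (u ∈ L ∧ v ∈ L) ∨ (u ∈ R' ∧ v ∈ R'))
    {t : ℕ} {A : Set V} (hL : (W.induce (A ∩ L)).CliqueFree t)
    (hR : (W.induce (A ∩ R')).CliqueFree t) : (W.induce A).CliqueFree t := by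
  rw [induce_cliqueFree_iff'] at hL hR ⊢
  intro s hsA hs
  have hside : (↑s : Set V) ⊆ L ∨ (↑s : Set V) ⊆ R' := by
    by_cases hc : (↑s : Set V) ⊆ L
    · exact Or.inl hc
    · right
      obtain ⟨z, hzs, hzL⟩ := Set.not_subset.mp hc
      have hzR : z ∈ R' := by
        have hz : z ∈ L ∪ R' := hsep ▸ Set.mem_univ z
        rcases hz with h | h
        · exact absurd h hzL
        · exact h
      intro y hy
      rcases eq_or_ne y z with rfl | hyz
      · exact hzR
      · have hadj : W.Adj y z := hs.1 hy hzs hyz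
        rcases hnoedge hadj with ⟨-, h2⟩ | ⟨h1, -⟩
        · exact absurd h2 hzL
        · exact h1
  rcases hside with h | h
  · exact hL s (fun x hx => ⟨hsA hx, h hx⟩) hs
  · exact hR s (fun x hx => ⟨hsA hx, h hx⟩) hs

/-- On a finite vertex set, total weights are finite. -/
lemma finsum_coe_ne_top {V : Type} [Fintype V] (w : V → ℕ) (T : Set V) :
    (∑ᶠ v ∈ T, (w v : ℕ∞)) ≠ ⊤ := by
  rw [← T.toFinite.coe_toFinset, finsum_mem_coe_finset, ← Nat.cast_sum]
  exact ENat.coe_ne_top _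

lemma ktCoverOpt_le {V : Type} (t : ℕ) (W : SimpleGraph V) (w : V → ℕ)
    (U R S : Set V) {S' : Set V} (h1 : S' ⊆ U) (h2 : S ∩ U ⊆ S') (h3 : S' ∩ R = ∅)
    (h4 : (W.induce (U \ S')).CliqueFree t) :
    ktCoverOpt t W w U R S ≤ ∑ᶠ v ∈ S', (w v : ℕ∞) :=
  sInf_le ⟨S', h1, h2, h3, h4, rfl⟩

lemma le_ktCoverOpt {V : Type} {t : ℕ} {W : SimpleGraph V} {w : V → ℕ}
    {U R S : Set V} {a : ℕ∞}
    (h : ∀ S' : Set V, S' ⊆ U → S ∩ U ⊆ S' → S' ∩ R = ∅ →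
      (W.induce (U \ S')).CliqueFree t → a ≤ ∑ᶠ v ∈ S', (w v : ℕ∞)) :
    a ≤ ktCoverOpt t W w U R S := by
  refine le_sInf ?_
  rintro n ⟨S', h1, h2, h3, h4, rfl⟩
  exact h S' h1 h2 h3 h4

lemma ktCoverOpt_exists {V : Type} {t : ℕ} {W : SimpleGraph V} {w : V → ℕ}
    {U R S : Set V} (h : ktCoverOpt t W w U R S ≠ ⊤) :
    ∃ S' : Set V, S' ⊆ U ∧ S ∩ U ⊆ S' ∧ S' ∩ R = ∅ ∧
      (W.induce (U \ S')).CliqueFree t ∧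
      ktCoverOpt t W w U R S = ∑ᶠ v ∈ S', (w v : ℕ∞) := by
  have hne : {n : ℕ∞ | ∃ S' : Set V, S' ⊆ U ∧ S ∩ U ⊆ S' ∧ S' ∩ R = ∅ ∧
      (W.induce (U \ S')).CliqueFree t ∧ n = ∑ᶠ v ∈ S', (w v : ℕ∞)}.Nonempty := by
    by_contra hne
    rw [Set.not_nonempty_iff_eq_empty] at hne
    exact h (by rw [ktCoverOpt, hne, sInf_empty])
  obtain ⟨S', h1, h2, h3, h4, h5⟩ := csInf_mem hne
  exact ⟨S', h1, h2, h3, h4, h5⟩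

/-- Gluing property for annotated weighted `K_t`-subgraph cover.  The gluing
`F ⊕ G` of two compatible boundaried graphs is modelled by a graph `W` together with
a separation `(L, R')` (so `F` is the part of `W` on `L`, `G` is the part on `R'`,
and the identified boundary is `L ∩ R'`).  Given a vertex weight function `w`, an
annotated set `X` containing the boundary, and a partition `(R, S)` of `X`
(forbidden/forced vertices), the optimum of the annotated problem on `F ⊕ G` equals
the sum of the optima on `F` and on `G` (with the annotations restricted), minus the
weight of `S ∩ L ∩ R'`. -/
theorem ktCover_gluing {V : Type} [Fintype V] (t : ℕ) (W : SimpleGraph V)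
    (w : V → ℕ) (L R' : Set V) (hsep : L ∪ R' = Set.univ)
    (hnoedge : ∀ ⦃u v : V⦄, W.Adj u v → (u ∈ L ∧ v ∈ L) ∨ (u ∈ R' ∧ v ∈ R'))
    (X R S : Set V) (hBX : L ∩ R' ⊆ X) (hpart : R ∪ S = X) (hdisj : R ∩ S = ∅) :
    ktCoverOpt t W w Set.univ R S =
      ktCoverOpt t W w L R S + ktCoverOpt t W w R' R S -
        ∑ᶠ v ∈ S ∩ L ∩ R', (w v : ℕ∞) := by
  classical
  have hcne : (∑ᶠ v ∈ S ∩ L ∩ R', (w v : ℕ∞)) ≠ ⊤ := finsum_coe_ne_top w _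
  -- membership in S for boundary vertices avoided by R
  have hmemS : ∀ {x : V}, x ∈ L → x ∈ R' → x ∉ R → x ∈ S := by
    intro x hxL hxR hxnR
    have hxX : x ∈ X := hBX ⟨hxL, hxR⟩
    rcases (hpart ▸ hxX : x ∈ R ∪ S) with h | h
    · exact absurd h hxnR
    · exact h
  apply le_antisymm
  · -- easy degenerate cases
    rcases eq_or_ne (ktCoverOpt t W w L R S) ⊤ with hL | hL
    · rw [hL, top_add, ENat.sub_eq_top_iff.mpr ⟨rfl, hcne⟩]
      exact le_top
    rcases eq_or_ne (ktCoverOpt t W w R' R S) ⊤ with hR | hR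
    · rw [hR, add_top, ENat.sub_eq_top_iff.mpr ⟨rfl, hcne⟩]
      exact le_top
    obtain ⟨Sl, hSl1, hSl2, hSl3, hSl4, hSl5⟩ := ktCoverOpt_exists hL
    obtain ⟨Sr, hSr1, hSr2, hSr3, hSr4, hSr5⟩ := ktCoverOpt_exists hR
    have hint : Sl ∩ Sr = S ∩ L ∩ R' := by
      apply Set.Subset.antisymm
      · rintro x ⟨hxl, hxr⟩
        have hxL : x ∈ L := hSl1 hxl
        have hxR : x ∈ R' := hSr1 hxr
        have hxnR : x ∉ R := fun hr => by
          have hx : x ∈ Sl ∩ R := ⟨hxl, hr⟩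
          rw [hSl3] at hx
          exact hx
        exact ⟨⟨hmemS hxL hxR hxnR, hxL⟩, hxR⟩
      · rintro x ⟨⟨hxS, hxL⟩, hxR⟩
        exact ⟨hSl2 ⟨hxS, hxL⟩, hSr2 ⟨hxS, hxR⟩⟩
    have key : (∑ᶠ v ∈ Sl ∪ Sr, (w v : ℕ∞)) + ∑ᶠ v ∈ S ∩ L ∩ R', (w v : ℕ∞) =
        (∑ᶠ v ∈ Sl, (w v : ℕ∞)) + ∑ᶠ v ∈ Sr, (w v : ℕ∞) := by
      rw [← hint]
      exact finsum_mem_union_inter (Set.toFinite _) (Set.toFinite _)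
    have hval : (∑ᶠ v ∈ Sl ∪ Sr, (w v : ℕ∞)) =
        ktCoverOpt t W w L R S + ktCoverOpt t W w R' R S -
          ∑ᶠ v ∈ S ∩ L ∩ R', (w v : ℕ∞) := by
      rw [hSl5, hSr5]
      exact (ENat.addLECancellable_of_ne_top hcne).eq_tsub_of_add_eq key
    rw [← hval]
    refine ktCoverOpt_le t W w Set.univ R S (Set.subset_univ _) ?_ ?_ ?_
    · rintro x ⟨hxS, -⟩
      rcases (hsep ▸ Set.mem_univ x : x ∈ L ∪ R') with h | h
      · exact Or.inl (hSl2 ⟨hxS, h⟩)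
      · exact Or.inr (hSr2 ⟨hxS, h⟩)
    · rw [Set.union_inter_distrib_right, hSl3, hSr3, Set.union_empty]
    · refine cliqueFree_split W hsep hnoedge ?_ ?_
      · refine cliqueFree_induce_mono W ?_ hSl4
        rintro x ⟨⟨-, hn⟩, hxL⟩
        exact ⟨hxL, fun h => hn (Or.inl h)⟩
      · refine cliqueFree_induce_mono W ?_ hSr4
        rintro x ⟨⟨-, hn⟩, hxR⟩
        exact ⟨hxR, fun h => hn (Or.inr h)⟩
  · refine le_ktCoverOpt ?_
    intro S' h1 h2 h3 h4
    have hS'L : ktCoverOpt t W w L R S ≤ ∑ᶠ v ∈ S' ∩ L, (w v : ℕ∞) := by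
      refine ktCoverOpt_le t W w L R S Set.inter_subset_right
        (fun x hx => ⟨h2 ⟨hx.1, Set.mem_univ x⟩, hx.2⟩) ?_ ?_
      · apply Set.eq_empty_of_subset_empty
        rw [← h3]
        exact fun x hx => ⟨hx.1.1, hx.2⟩
      · refine cliqueFree_induce_mono W ?_ h4
        rintro x ⟨hxL, hn⟩
        exact ⟨Set.mem_univ x, fun h => hn ⟨h, hxL⟩⟩
    have hS'R : ktCoverOpt t W w R' R S ≤ ∑ᶠ v ∈ S' ∩ R', (w v : ℕ∞) := by
      refine ktCoverOpt_le t W w R' R S Set.inter_subset_right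
        (fun x hx => ⟨h2 ⟨hx.1, Set.mem_univ x⟩, hx.2⟩) ?_ ?_
      · apply Set.eq_empty_of_subset_empty
        rw [← h3]
        exact fun x hx => ⟨hx.1.1, hx.2⟩
      · refine cliqueFree_induce_mono W ?_ h4
        rintro x ⟨hxR, hn⟩
        exact ⟨Set.mem_univ x, fun h => hn ⟨h, hxR⟩⟩
    have hu : (S' ∩ L) ∪ (S' ∩ R') = S' := by
      rw [← Set.inter_union_distrib_left, hsep, Set.inter_univ]
    have hi : (S' ∩ L) ∩ (S' ∩ R') = S ∩ L ∩ R' := by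
      apply Set.Subset.antisymm
      · rintro x ⟨⟨hxS', hxL⟩, ⟨-, hxR⟩⟩
        have hxnR : x ∉ R := fun hr => by
          have hx : x ∈ S' ∩ R := ⟨hxS', hr⟩
          rw [h3] at hx
          exact hx
        exact ⟨⟨hmemS hxL hxR hxnR, hxL⟩, hxR⟩
      · rintro x ⟨⟨hxS, hxL⟩, hxR⟩
        have hxS' : x ∈ S' := h2 ⟨hxS, Set.mem_univ x⟩
        exact ⟨⟨hxS', hxL⟩, ⟨hxS', hxR⟩⟩
    have hkey : (∑ᶠ v ∈ S' ∩ L, (w v : ℕ∞)) + ∑ᶠ v ∈ S' ∩ R', (w v : ℕ∞) =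
        (∑ᶠ v ∈ S', (w v : ℕ∞)) + ∑ᶠ v ∈ S ∩ L ∩ R', (w v : ℕ∞) := by
      rw [← finsum_mem_union_inter (Set.toFinite (S' ∩ L)) (Set.toFinite (S' ∩ R')),
        hu, hi]
    calc ktCoverOpt t W w L R S + ktCoverOpt t W w R' R S -
          ∑ᶠ v ∈ S ∩ L ∩ R', (w v : ℕ∞)
        ≤ ((∑ᶠ v ∈ S' ∩ L, (w v : ℕ∞)) + ∑ᶠ v ∈ S' ∩ R', (w v : ℕ∞)) -
          ∑ᶠ v ∈ S ∩ L ∩ R', (w v : ℕ∞) :=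
          tsub_le_tsub_right (add_le_add hS'L hS'R) _
      _ = ((∑ᶠ v ∈ S', (w v : ℕ∞)) + ∑ᶠ v ∈ S ∩ L ∩ R', (w v : ℕ∞)) -
          ∑ᶠ v ∈ S ∩ L ∩ R', (w v : ℕ∞) := by rw [hkey]
      _ = ∑ᶠ v ∈ S', (w v : ℕ∞) :=
          (ENat.addLECancellable_of_ne_top hcne).add_tsub_cancel_right
end

section
/- Correctness of the OCT reduction to vertex cuts: let G be a graph, let A, B ⊆ V(G) be disjoint sets with X = A ∪ B such that G − X is bipartite with parts (S₁, S₂). Let G⁺ be obtained from G by adding all edges between A and B, and construct the bipartite auxiliary graph G' on vertex set (V(G)∖X) ∪ {x₁, x₂ : x ∈ X} where: edges of G⁺ − X are kept; an edge from y ∈ S_i to x ∈ X becomes y x_{3−i}; and an edge between a ∈ A and b ∈ B becomes a₁b₂. Set Y₁ = A₁ ∪ B₂ and Y₂ = A₂ ∪ B₁. Then for any S* ⊆ V(G) ∖ X: S* is a (Y₁, Y₂)-vertex-cut in G' if and only if S* is an odd cycle transversal of G such that in the resulting bipartition of G − S*, all of A lies on one side and all of B lies on the other side. -/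
/-- The bipartite auxiliary graph `G'` used in the reduction of annotated odd cycle
transversal to vertex cuts.  The vertices are `Sum.inl y` for the vertices `y` of `G`
outside `X = A ∪ B`, together with two copies `Sum.inr (x, false)` (the copy `x₁`)
and `Sum.inr (x, true)` (the copy `x₂`) of every vertex `x ∈ X`.  Edges of
`G⁺ - X` are kept; an edge from `y ∈ S₁` (resp. `y ∈ S₂`) to `x ∈ X` becomes an edge
to `x₂` (resp. `x₁`); and for all `a ∈ A`, `b ∈ B` (the edges of `G⁺` between `A`
and `B`) there is an edge `a₁ b₂`. -/
def octAuxGraph {V : Type} (G : SimpleGraph V) (A B S₁ S₂ : Set V) :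
    SimpleGraph (V ⊕ V × Bool) :=
  SimpleGraph.fromRel (fun u v =>
    (∃ y z : V, u = Sum.inl y ∧ v = Sum.inl z ∧ y ∉ A ∪ B ∧ z ∉ A ∪ B ∧ G.Adj y z) ∨
    (∃ (y x : V), u = Sum.inl y ∧ v = Sum.inr (x, true) ∧ y ∈ S₁ ∧ x ∈ A ∪ B ∧
      G.Adj y x) ∨
    (∃ (y x : V), u = Sum.inl y ∧ v = Sum.inr (x, false) ∧ y ∈ S₂ ∧ x ∈ A ∪ B ∧
      G.Adj y x) ∨
    (∃ a b : V, u = Sum.inr (a, false) ∧ v = Sum.inr (b, true) ∧ a ∈ A ∧ b ∈ B))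

/-- `Y₁ = A₁ ∪ B₂`. -/
def octY₁ {V : Type} (A B : Set V) : Set (V ⊕ V × Bool) :=
  {p | (∃ a ∈ A, p = Sum.inr (a, false)) ∨ (∃ b ∈ B, p = Sum.inr (b, true))}

/-- `Y₂ = A₂ ∪ B₁`. -/
def octY₂ {V : Type} (A B : Set V) : Set (V ⊕ V × Bool) :=
  {p | (∃ a ∈ A, p = Sum.inr (a, true)) ∨ (∃ b ∈ B, p = Sum.inr (b, false))}


/-- Reachability from `Y₁` in the auxiliary graph avoiding the copies of `Sstar`. -/
def octR {V : Type} (G : SimpleGraph V) (A B S₁ S₂ Sstar : Set V) :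
    Set (V ⊕ V × Bool) :=
  {v | ∃ p ∈ octY₁ A B, ∃ w : (octAuxGraph G A B S₁ S₂).Walk p v,
    ∀ s ∈ Sstar, Sum.inl s ∉ w.support}

open Classical in
/-- The coloring extracted from the reachability set. -/
noncomputable def octC {V : Type} (G : SimpleGraph V) (A B S₁ S₂ Sstar : Set V) :
    V → Bool := fun y =>
  if y ∈ A then false else if y ∈ B then true
  else if (Sum.inl y ∈ octR G A B S₁ S₂ Sstar ↔ y ∈ S₂) then true else false

lemma octC_A {V : Type} {G : SimpleGraph V} {A B S₁ S₂ Sstar : Set V} {y : V}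
    (h : y ∈ A) : octC G A B S₁ S₂ Sstar y = false := by
  simp [octC, h]

lemma octC_B {V : Type} {G : SimpleGraph V} {A B S₁ S₂ Sstar : Set V} {y : V}
    (hA : y ∉ A) (h : y ∈ B) : octC G A B S₁ S₂ Sstar y = true := by
  simp [octC, hA, h]

lemma octC_out_pos {V : Type} {G : SimpleGraph V} {A B S₁ S₂ Sstar : Set V} {y : V}
    (hA : y ∉ A) (hB : y ∉ B)
    (h : Sum.inl y ∈ octR G A B S₁ S₂ Sstar ↔ y ∈ S₂) :
    octC G A B S₁ S₂ Sstar y = true := by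
  simp [octC, hA, hB, h]

lemma octC_out_neg {V : Type} {G : SimpleGraph V} {A B S₁ S₂ Sstar : Set V} {y : V}
    (hA : y ∉ A) (hB : y ∉ B)
    (h : ¬ (Sum.inl y ∈ octR G A B S₁ S₂ Sstar ↔ y ∈ S₂)) :
    octC G A B S₁ S₂ Sstar y = false := by
  simp only [octC, if_neg hA, if_neg hB, if_neg h]

open Classical in
/-- The potential function used in the easy direction. -/
noncomputable def octF {V : Type} (c : V → Bool) (B S₂ : Set V) :
    V ⊕ V × Bool → Bool
  | Sum.inl y => xor (c y) (if y ∈ S₂ then true else false)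
  | Sum.inr (x, t) => if x ∈ B then !t else t

lemma octF_inl_mem {V : Type} (c : V → Bool) (B S₂ : Set V) {y : V} (h : y ∈ S₂) :
    octF c B S₂ (Sum.inl y) = !(c y) := by
  simp [octF, h, Bool.xor_true]

lemma octF_inl_not_mem {V : Type} (c : V → Bool) (B S₂ : Set V) {y : V}
    (h : y ∉ S₂) : octF c B S₂ (Sum.inl y) = c y := by
  simp [octF, h]

lemma octF_inr_mem {V : Type} (c : V → Bool) (B S₂ : Set V) {x : V} {t : Bool}
    (h : x ∈ B) : octF c B S₂ (Sum.inr (x, t)) = !t := by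
  simp [octF, h]

lemma octF_inr_not_mem {V : Type} (c : V → Bool) (B S₂ : Set V) {x : V} {t : Bool}
    (h : x ∉ B) : octF c B S₂ (Sum.inr (x, t)) = t := by
  simp [octF, h]

/-- Correctness of the reduction from annotated odd cycle transversal to vertex cuts:
let `A` and `B` be disjoint independent sets with `X = A ∪ B` such that `G - X` is
bipartite with parts `(S₁, S₂)`.  Then, for any `S* ⊆ V(G) ∖ X`, the set `S*` meets
every walk from `Y₁` to `Y₂` in the auxiliary graph `G'` if and only if `S*` is an
odd cycle transversal of `G` such that in the resulting bipartition of `G - S*`, all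
of `A` lies on one side and all of `B` lies on the other side. -/
theorem oct_reduction_correct {V : Type} [Fintype V] (G : SimpleGraph V)
    (A B S₁ S₂ : Set V) (hAB : A ∩ B = ∅)
    (hAind : ∀ a ∈ A, ∀ a' ∈ A, ¬ G.Adj a a')
    (hBind : ∀ b ∈ B, ∀ b' ∈ B, ¬ G.Adj b b')
    (hS : S₁ ∪ S₂ = (A ∪ B)ᶜ) (hSdisj : S₁ ∩ S₂ = ∅)
    (hS₁ind : ∀ y ∈ S₁, ∀ z ∈ S₁, ¬ G.Adj y z)
    (hS₂ind : ∀ y ∈ S₂, ∀ z ∈ S₂, ¬ G.Adj y z)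
    (Sstar : Set V) (hSstar : Sstar ⊆ (A ∪ B)ᶜ) :
    (∀ p q : V ⊕ V × Bool, p ∈ octY₁ A B → q ∈ octY₂ A B →
      ∀ walk : (octAuxGraph G A B S₁ S₂).Walk p q,
        ∃ s ∈ Sstar, Sum.inl s ∈ walk.support) ↔
    (∃ c : V → Bool,
      (∀ ⦃u v : V⦄, u ∉ Sstar → v ∉ Sstar → G.Adj u v → c u ≠ c v) ∧
      (∀ a ∈ A, c a = false) ∧ (∀ b ∈ B, c b = true)) := by

  classical
  have hAnB : ∀ a ∈ A, a ∉ B := fun a ha hb =>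
    absurd (Set.mem_inter ha hb) (by simp [hAB])
  have hBnA : ∀ b ∈ B, b ∉ A := fun b hb ha =>
    absurd (Set.mem_inter ha hb) (by simp [hAB])
  have hS₁nS₂ : ∀ y ∈ S₁, y ∉ S₂ := fun y h1 h2 =>
    absurd (Set.mem_inter h1 h2) (by simp [hSdisj])
  have hXnS : ∀ x ∈ A ∪ B, x ∉ Sstar := fun x hx hs => (hSstar hs) hx
  have hmem : ∀ y, y ∉ A ∪ B → y ∈ S₁ ∨ y ∈ S₂ := by
    intro y hy
    have : y ∈ S₁ ∪ S₂ := by rw [hS]; exact hy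
    exact this
  have hadj1 : ∀ y z, y ∉ A ∪ B → z ∉ A ∪ B → G.Adj y z →
      (octAuxGraph G A B S₁ S₂).Adj (Sum.inl y) (Sum.inl z) := by
    intro y z h1 h2 h3
    rw [octAuxGraph, SimpleGraph.fromRel_adj]
    exact ⟨by simp [h3.ne], Or.inl (Or.inl ⟨y, z, rfl, rfl, h1, h2, h3⟩)⟩
  have hadj2 : ∀ y x, y ∈ S₁ → x ∈ A ∪ B → G.Adj y x →
      (octAuxGraph G A B S₁ S₂).Adj (Sum.inl y) (Sum.inr (x, true)) := by
    intro y x h1 h2 h3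
    rw [octAuxGraph, SimpleGraph.fromRel_adj]
    exact ⟨by simp, Or.inl (Or.inr (Or.inl ⟨y, x, rfl, rfl, h1, h2, h3⟩))⟩
  have hadj3 : ∀ y x, y ∈ S₂ → x ∈ A ∪ B → G.Adj y x →
      (octAuxGraph G A B S₁ S₂).Adj (Sum.inl y) (Sum.inr (x, false)) := by
    intro y x h1 h2 h3
    rw [octAuxGraph, SimpleGraph.fromRel_adj]
    exact ⟨by simp, Or.inl (Or.inr (Or.inr (Or.inl ⟨y, x, rfl, rfl, h1, h2, h3⟩)))⟩
  constructor
  · -- cut → coloring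
    intro hcut
    have hY₁R : ∀ p ∈ octY₁ A B, p ∈ octR G A B S₁ S₂ Sstar := by
      intro p hp
      refine ⟨p, hp, SimpleGraph.Walk.nil, ?_⟩
      intro s hs hmem'
      simp only [SimpleGraph.Walk.support_nil, List.mem_singleton] at hmem'
      rcases hp with ⟨a, ha, rfl⟩ | ⟨b, hb, rfl⟩ <;> simp at hmem'
    have hRcl : ∀ u v, u ∈ octR G A B S₁ S₂ Sstar →
        (octAuxGraph G A B S₁ S₂).Adj u v →
        (∀ s ∈ Sstar, v ≠ Sum.inl s) → v ∈ octR G A B S₁ S₂ Sstar := by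
      intro u v hu hadj hv
      obtain ⟨p, hp, w, hw⟩ := hu
      refine ⟨p, hp, w.concat hadj, ?_⟩
      intro s hs hmem'
      rw [SimpleGraph.Walk.support_concat] at hmem'
      simp only [List.concat_eq_append, List.mem_append, List.mem_singleton] at hmem'
      rcases hmem' with h | h
      · exact hw s hs h
      · exact hv s hs h.symm
    have hRY₂ : ∀ q ∈ octY₂ A B, q ∉ octR G A B S₁ S₂ Sstar := by
      rintro q hq ⟨p, hp, w, hw⟩
      obtain ⟨s, hs, hmem'⟩ := hcut p q hp hq w
      exact hw s hs hmem'
    set c := octC G A B S₁ S₂ Sstar with hcdef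
    have HoutA : ∀ y, y ∉ A ∪ B → y ∉ Sstar → ∀ x ∈ A, G.Adj y x → c y = true := by
      intro y hyX hyS x hxA hadj
      have hyA : y ∉ A := fun h => hyX (Or.inl h)
      have hyB : y ∉ B := fun h => hyX (Or.inr h)
      rcases hmem y hyX with h1 | h2
      · have hnR : Sum.inl y ∉ octR G A B S₁ S₂ Sstar := by
          intro hR
          have hadj' := hadj2 y x h1 (Or.inl hxA) hadj
          have : Sum.inr (x, true) ∈ octR G A B S₁ S₂ Sstar :=
            hRcl _ _ hR hadj' (by intro s _ h; simp at h)
          exact hRY₂ _ (Or.inl ⟨x, hxA, rfl⟩) this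
        rw [hcdef]; exact octC_out_pos hyA hyB (iff_of_false hnR (hS₁nS₂ y h1))
      · have hR : Sum.inl y ∈ octR G A B S₁ S₂ Sstar := by
          have hadj' := (hadj3 y x h2 (Or.inl hxA) hadj).symm
          refine hRcl _ _ (hY₁R _ (Or.inl ⟨x, hxA, rfl⟩)) hadj' ?_
          intro s hs h
          exact hyS (by rw [Sum.inl.injEq] at h; exact h ▸ hs)
        rw [hcdef]; exact octC_out_pos hyA hyB (iff_of_true hR h2)
    have HoutB : ∀ y, y ∉ A ∪ B → y ∉ Sstar → ∀ x ∈ B, G.Adj y x → c y = false := by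
      intro y hyX hyS x hxB hadj
      have hyA : y ∉ A := fun h => hyX (Or.inl h)
      have hyB : y ∉ B := fun h => hyX (Or.inr h)
      rcases hmem y hyX with h1 | h2
      · have hR : Sum.inl y ∈ octR G A B S₁ S₂ Sstar := by
          have hadj' := (hadj2 y x h1 (Or.inr hxB) hadj).symm
          refine hRcl _ _ (hY₁R _ (Or.inr ⟨x, hxB, rfl⟩)) hadj' ?_
          intro s hs h
          exact hyS (by rw [Sum.inl.injEq] at h; exact h ▸ hs)
        rw [hcdef]; exact octC_out_neg hyA hyB (by simp [hR, hS₁nS₂ y h1])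
      · have hnR : Sum.inl y ∉ octR G A B S₁ S₂ Sstar := by
          intro hRy
          have hadj' := hadj3 y x h2 (Or.inr hxB) hadj
          have : Sum.inr (x, false) ∈ octR G A B S₁ S₂ Sstar :=
            hRcl _ _ hRy hadj' (by intro s _ h; simp at h)
          exact hRY₂ _ (Or.inr ⟨x, hxB, rfl⟩) this
        rw [hcdef]; exact octC_out_neg hyA hyB (by simp [hnR, h2])
    have Houtout : ∀ y z, y ∉ A ∪ B → z ∉ A ∪ B → y ∉ Sstar → z ∉ Sstar →
        G.Adj y z → c y ≠ c z := by
      intro y z hyX hzX hyS hzS hadj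
      have hyA : y ∉ A := fun h => hyX (Or.inl h)
      have hyB : y ∉ B := fun h => hyX (Or.inr h)
      have hzA : z ∉ A := fun h => hzX (Or.inl h)
      have hzB : z ∉ B := fun h => hzX (Or.inr h)
      have hRequiv : Sum.inl y ∈ octR G A B S₁ S₂ Sstar ↔
          Sum.inl z ∈ octR G A B S₁ S₂ Sstar := by
        constructor
        · intro h
          refine hRcl _ _ h (hadj1 y z hyX hzX hadj) ?_
          intro s hs hh
          exact hzS (by rw [Sum.inl.injEq] at hh; exact hh ▸ hs)
        · intro h
          refine hRcl _ _ h (hadj1 y z hyX hzX hadj).symm ?_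
          intro s hs hh
          exact hyS (by rw [Sum.inl.injEq] at hh; exact hh ▸ hs)
      rcases hmem y hyX with h1 | h2 <;> rcases hmem z hzX with g1 | g2
      · exact absurd hadj (hS₁ind y h1 z g1)
      · by_cases hR : Sum.inl y ∈ octR G A B S₁ S₂ Sstar
        · rw [hcdef, octC_out_neg hyA hyB (by simp [hR, hS₁nS₂ y h1]),
            octC_out_pos hzA hzB (iff_of_true (hRequiv.mp hR) g2)]
          simp
        · rw [hcdef, octC_out_pos hyA hyB (iff_of_false hR (hS₁nS₂ y h1)),
            octC_out_neg hzA hzB (by simp [g2]; exact fun h => hR (hRequiv.mpr h))]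
          simp
      · by_cases hR : Sum.inl y ∈ octR G A B S₁ S₂ Sstar
        · rw [hcdef, octC_out_pos hyA hyB (iff_of_true hR h2),
            octC_out_neg hzA hzB (by simp [hRequiv.mp hR, hS₁nS₂ z g1])]
          simp
        · rw [hcdef, octC_out_neg hyA hyB (by simp [hR, h2]),
            octC_out_pos hzA hzB (iff_of_false (fun h => hR (hRequiv.mpr h))
              (hS₁nS₂ z g1))]
          simp
      · exact absurd hadj (hS₂ind y h2 z g2)
    refine ⟨c, ?_, fun a ha => octC_A ha, fun b hb => octC_B (hBnA b hb) hb⟩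
    intro u v huS hvS hadj
    by_cases huX : u ∈ A ∪ B <;> by_cases hvX : v ∈ A ∪ B
    · rcases huX with ha | hb <;> rcases hvX with ha' | hb'
      · exact absurd hadj (hAind u ha v ha')
      · rw [hcdef, octC_A ha, octC_B (hBnA v hb') hb']; simp
      · rw [hcdef, octC_B (hBnA u hb) hb, octC_A ha']; simp
      · exact absurd hadj (hBind u hb v hb')
    · rcases huX with ha | hb
      · rw [HoutA v hvX hvS u ha hadj.symm, hcdef, octC_A ha]; simp
      · rw [HoutB v hvX hvS u hb hadj.symm, hcdef, octC_B (hBnA u hb) hb]; simp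
    · rcases hvX with ha | hb
      · rw [HoutA u huX huS v ha hadj, hcdef, octC_A ha]; simp
      · rw [HoutB u huX huS v hb hadj, hcdef, octC_B (hBnA v hb) hb]; simp
    · exact Houtout u v huX hvX huS hvS hadj
  · -- coloring → cut
    rintro ⟨c, hc, hcA, hcB⟩ p q hp hq walk
    by_contra hno
    push_neg at hno
    set f := octF c B S₂ with hfdef
    have hf : ∀ u v : V ⊕ V × Bool, (octAuxGraph G A B S₁ S₂).Adj u v →
        (∀ s ∈ Sstar, u ≠ Sum.inl s) → (∀ s ∈ Sstar, v ≠ Sum.inl s) → f u = f v := by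
      have key : ∀ u v : V ⊕ V × Bool,
          ((∃ y z : V, u = Sum.inl y ∧ v = Sum.inl z ∧ y ∉ A ∪ B ∧ z ∉ A ∪ B ∧ G.Adj y z) ∨
          (∃ (y x : V), u = Sum.inl y ∧ v = Sum.inr (x, true) ∧ y ∈ S₁ ∧ x ∈ A ∪ B ∧
            G.Adj y x) ∨
          (∃ (y x : V), u = Sum.inl y ∧ v = Sum.inr (x, false) ∧ y ∈ S₂ ∧ x ∈ A ∪ B ∧
            G.Adj y x) ∨
          (∃ a b : V, u = Sum.inr (a, false) ∧ v = Sum.inr (b, true) ∧ a ∈ A ∧ b ∈ B)) →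
          (∀ s ∈ Sstar, u ≠ Sum.inl s) → (∀ s ∈ Sstar, v ≠ Sum.inl s) → f u = f v := by
        rintro u v (⟨y, z, rfl, rfl, hyX, hzX, hadj⟩ |
          ⟨y, x, rfl, rfl, hy1, hxX, hadj⟩ | ⟨y, x, rfl, rfl, hy2, hxX, hadj⟩ |
          ⟨a, b, rfl, rfl, ha, hb⟩) <;> intro hu hv
        · have hyS : y ∉ Sstar := fun h => hu y h rfl
          have hzS : z ∉ Sstar := fun h => hv z h rfl
          have hne := hc hyS hzS hadj
          rcases hmem y hyX with h1 | h2 <;> rcases hmem z hzX with g1 | g2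
          · exact absurd hadj (hS₁ind y h1 z g1)
          · rw [hfdef, octF_inl_not_mem c B S₂ (hS₁nS₂ y h1), octF_inl_mem c B S₂ g2]
            exact Bool.eq_not_iff.mpr hne
          · rw [hfdef, octF_inl_mem c B S₂ h2, octF_inl_not_mem c B S₂ (hS₁nS₂ z g1)]
            exact (Bool.eq_not_iff.mpr hne.symm).symm
          · exact absurd hadj (hS₂ind y h2 z g2)
        · have hyS : y ∉ Sstar := fun h => hu y h rfl
          have hne := hc hyS (hXnS x hxX) hadj
          rcases hxX with hxA | hxB
          · have hcy : c y = true := by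
              have h := hne; rw [hcA x hxA] at h; exact Bool.ne_false_iff.mp h
            rw [hfdef, octF_inl_not_mem c B S₂ (hS₁nS₂ y hy1),
              octF_inr_not_mem c B S₂ (hAnB x hxA), hcy]
          · have hcy : c y = false := by
              have h := hne; rw [hcB x hxB] at h; exact Bool.eq_false_iff.mpr h
            rw [hfdef, octF_inl_not_mem c B S₂ (hS₁nS₂ y hy1),
              octF_inr_mem c B S₂ hxB, hcy]
            rfl
        · have hyS : y ∉ Sstar := fun h => hu y h rfl
          have hne := hc hyS (hXnS x hxX) hadj
          rcases hxX with hxA | hxB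
          · have hcy : c y = true := by
              have h := hne; rw [hcA x hxA] at h; exact Bool.ne_false_iff.mp h
            rw [hfdef, octF_inl_mem c B S₂ hy2, octF_inr_not_mem c B S₂ (hAnB x hxA),
              hcy]
            rfl
          · have hcy : c y = false := by
              have h := hne; rw [hcB x hxB] at h; exact Bool.eq_false_iff.mpr h
            rw [hfdef, octF_inl_mem c B S₂ hy2, octF_inr_mem c B S₂ hxB, hcy]
        · rw [hfdef, octF_inr_not_mem c B S₂ (hAnB a ha), octF_inr_mem c B S₂ hb]
          rfl
      intro u v hadj hu hv
      rw [octAuxGraph, SimpleGraph.fromRel_adj] at hadj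
      rcases hadj.2 with h | h
      · exact key u v h hu hv
      · exact (key v u h hv hu).symm
    have hinv : ∀ (a b : V ⊕ V × Bool) (w : (octAuxGraph G A B S₁ S₂).Walk a b),
        (∀ s ∈ Sstar, Sum.inl s ∉ w.support) → f a = f b := by
      intro a b w
      induction w with
      | nil => intro _; rfl
      | @cons u x b h w ih =>
        intro hsup
        have hsup' : ∀ s ∈ Sstar, Sum.inl s ∉ w.support := by
          intro s hs hmem'
          exact hsup s hs
            (by rw [SimpleGraph.Walk.support_cons]; exact List.mem_cons_of_mem _ hmem')
        have hu : ∀ s ∈ Sstar, u ≠ Sum.inl s := by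
          intro s hs heq
          exact hsup s hs
            (by rw [SimpleGraph.Walk.support_cons, heq]; exact List.mem_cons_self)
        have hx : ∀ s ∈ Sstar, x ≠ Sum.inl s := by
          intro s hs heq
          exact hsup' s hs (heq ▸ w.start_mem_support)
        exact (hf u x h hu hx).trans (ih hsup')
    have hfp : f p = false := by
      rcases hp with ⟨a, ha, rfl⟩ | ⟨b, hb, rfl⟩
      · rw [hfdef, octF_inr_not_mem c B S₂ (hAnB a ha)]
      · rw [hfdef, octF_inr_mem c B S₂ hb]; rfl
    have hfq : f q = true := by
      rcases hq with ⟨a, ha, rfl⟩ | ⟨b, hb, rfl⟩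
      · rw [hfdef, octF_inr_not_mem c B S₂ (hAnB a ha)]
      · rw [hfdef, octF_inr_mem c B S₂ hb]; rfl
    have := hinv p q walk (fun s hs => hno s hs)
    rw [hfp, hfq] at this
    exact absurd this (by simp)
end

section
/- Gluing property for annotated maximum cut: let F and G be compatible boundaried graphs, let X be a set of vertices of F ⊕ G containing the identified boundary B_F ∩ B_G, let w be an edge-weight function, and let (X₁, X₂) be a partition of X. Let opt(H) denote the maximum total weight of an edge cut of H induced by a bipartition extending (X₁ ∩ V(H), X₂ ∩ V(H)). Then opt(F ⊕ G) = opt(F) + opt(G) − w(E(X₁ ∩ B_F ∩ B_G, X₂ ∩ B_F ∩ B_G)). -/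
/-- The optimum value of the annotated maximum weighted cut problem on the part of
the graph `W` induced by the vertex set `U`: the maximum total weight of an edge cut
of the part of `W` on `U` induced by a bipartition `(P₁, P₂)` of `U` extending the
annotation `(X₁ ∩ U, X₂ ∩ U)`. -/
noncomputable def maxCutOpt {V : Type} (W : SimpleGraph V) (w : Sym2 V → ℕ)
    (U X₁ X₂ : Set V) : ℕ∞ :=
  sSup {n : ℕ∞ | ∃ P₁ P₂ : Set V, P₁ ∪ P₂ = U ∧ P₁ ∩ P₂ = ∅ ∧
    X₁ ∩ U ⊆ P₁ ∧ X₂ ∩ U ⊆ P₂ ∧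
    n = ∑ᶠ e ∈ {e : Sym2 V | ∃ u v : V, e = s(u, v) ∧ W.Adj u v ∧ u ∈ P₁ ∧ v ∈ P₂},
      (w e : ℕ∞)}

namespace MaxCutAux

open Classical

variable {V : Type} [Fintype V]

/-- The set of cut edges. -/
def cutE (W : SimpleGraph V) (P₁ P₂ : Set V) : Set (Sym2 V) :=
  {e : Sym2 V | ∃ u v : V, e = s(u, v) ∧ W.Adj u v ∧ u ∈ P₁ ∧ v ∈ P₂}

/-- The natural-number weight of a set of edges. -/
noncomputable def cw (w : Sym2 V → ℕ) (S : Set (Sym2 V)) : ℕ :=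
  ∑ e ∈ (Set.toFinite S).toFinset, w e

lemma cw_finsum (w : Sym2 V → ℕ) (S : Set (Sym2 V)) :
    ∑ᶠ e ∈ S, (w e : ℕ∞) = (cw w S : ℕ∞) := by
  have h : S = ((Set.toFinite S).toFinset : Set (Sym2 V)) :=
    (Set.Finite.coe_toFinset _).symm
  conv_lhs => rw [h]
  rw [finsum_mem_coe_finset, cw]
  push_cast
  rfl

lemma cw_union_inter (w : Sym2 V → ℕ) (S T : Set (Sym2 V)) :
    cw w (S ∪ T) + cw w (S ∩ T) = cw w S + cw w T := by
  classical
  have hU : (Set.toFinite (S ∪ T)).toFinset =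
      (Set.toFinite S).toFinset ∪ (Set.toFinite T).toFinset := by
    apply Finset.coe_injective; simp
  have hI : (Set.toFinite (S ∩ T)).toFinset =
      (Set.toFinite S).toFinset ∩ (Set.toFinite T).toFinset := by
    apply Finset.coe_injective; simp
  simp only [cw, hU, hI]
  exact Finset.sum_union_inter

lemma cw_mono (w : Sym2 V → ℕ) {S T : Set (Sym2 V)} (h : S ⊆ T) :
    cw w S ≤ cw w T := by
  apply Finset.sum_le_sum_of_subset
  intro e he
  simp only [Set.Finite.mem_toFinset] at he ⊢
  exact h he

lemma maxCutOpt_eq (W : SimpleGraph V) (w : Sym2 V → ℕ) (U X₁ X₂ : Set V) :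
    maxCutOpt W w U X₁ X₂ = sSup {n : ℕ∞ | ∃ P₁ P₂ : Set V,
      (P₁ ∪ P₂ = U ∧ P₁ ∩ P₂ = ∅ ∧ X₁ ∩ U ⊆ P₁ ∧ X₂ ∩ U ⊆ P₂) ∧
      n = (cw w (cutE W P₁ P₂) : ℕ∞)} := by
  unfold maxCutOpt
  congr 1
  ext n
  simp only [Set.mem_setOf_eq]
  constructor
  · rintro ⟨P₁, P₂, h1, h2, h3, h4, h5⟩
    exact ⟨P₁, P₂, ⟨h1, h2, h3, h4⟩, h5.trans (cw_finsum w _)⟩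
  · rintro ⟨P₁, P₂, ⟨h1, h2, h3, h4⟩, h5⟩
    exact ⟨P₁, P₂, h1, h2, h3, h4, h5.trans (cw_finsum w _).symm⟩

/-- The optimum is attained by a feasible bipartition. -/
lemma opt_mem (W : SimpleGraph V) (w : Sym2 V → ℕ) (U X₁ X₂ : Set V)
    (hdisj : X₁ ∩ X₂ = ∅) :
    ∃ P₁ P₂ : Set V, (P₁ ∪ P₂ = U ∧ P₁ ∩ P₂ = ∅ ∧ X₁ ∩ U ⊆ P₁ ∧ X₂ ∩ U ⊆ P₂) ∧
      maxCutOpt W w U X₁ X₂ = (cw w (cutE W P₁ P₂) : ℕ∞) := by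
  rw [maxCutOpt_eq]
  set s : Set ℕ∞ := {n : ℕ∞ | ∃ P₁ P₂ : Set V,
      (P₁ ∪ P₂ = U ∧ P₁ ∩ P₂ = ∅ ∧ X₁ ∩ U ⊆ P₁ ∧ X₂ ∩ U ⊆ P₂) ∧
      n = (cw w (cutE W P₁ P₂) : ℕ∞)} with hs
  have hne : s.Nonempty := by
    refine ⟨_, U \ X₂, X₂ ∩ U, ⟨?_, ?_, ?_, ?_⟩, rfl⟩
    · ext x; constructor
      · rintro (⟨hx, _⟩ | ⟨_, hx⟩) <;> exact hx
      · intro hx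
        by_cases hx2 : x ∈ X₂
        · exact Or.inr ⟨hx2, hx⟩
        · exact Or.inl ⟨hx, hx2⟩
    · ext x
      simp only [Set.mem_inter_iff, Set.mem_diff, Set.mem_empty_iff_false, iff_false]
      rintro ⟨⟨_, h2⟩, h3, _⟩; exact h2 h3
    · rintro x ⟨hx1, hxU⟩
      refine ⟨hxU, fun hx2 => ?_⟩
      have : x ∈ X₁ ∩ X₂ := ⟨hx1, hx2⟩
      rw [hdisj] at this; exact this
    · rintro x ⟨hx2, hxU⟩; exact ⟨hx2, hxU⟩
  have hfin : s.Finite := by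
    have hsub : s ⊆ (fun m : ℕ => (m : ℕ∞)) '' Set.Iic (cw w Set.univ) := by
      rintro n ⟨P₁, P₂, _, rfl⟩
      exact ⟨cw w (cutE W P₁ P₂), cw_mono w (Set.subset_univ _), rfl⟩
    exact Set.Finite.subset ((Set.finite_Iic _).image _) hsub
  have hmem : sSup s ∈ s := hne.csSup_mem hfin
  obtain ⟨P₁, P₂, hf, hv⟩ := hmem
  exact ⟨P₁, P₂, hf, hv⟩

end MaxCutAux

open MaxCutAux

/-- Gluing property for annotated maximum weighted cut.  The gluing `F ⊕ G` of two
compatible boundaried graphs is modelled by a graph `W` with a separation `(L, R')`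
(so `F` is the part of `W` on `L`, `G` the part on `R'`, and the identified boundary
is `L ∩ R'`).  Given an edge weight function `w` and a partition `(X₁, X₂)` of an
annotated set `X` containing the boundary, the optimum on `F ⊕ G` equals the sum of
the optima on `F` and on `G` minus the weight of the edges between
`X₁ ∩ L ∩ R'` and `X₂ ∩ L ∩ R'`. -/
theorem maxCut_gluing {V : Type} [Fintype V] (W : SimpleGraph V) (w : Sym2 V → ℕ)
    (L R' : Set V) (hsep : L ∪ R' = Set.univ)
    (hnoedge : ∀ ⦃u v : V⦄, W.Adj u v → (u ∈ L ∧ v ∈ L) ∨ (u ∈ R' ∧ v ∈ R'))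
    (X X₁ X₂ : Set V) (hBX : L ∩ R' ⊆ X) (hpart : X₁ ∪ X₂ = X)
    (hdisj : X₁ ∩ X₂ = ∅) :
    maxCutOpt W w Set.univ X₁ X₂ =
      maxCutOpt W w L X₁ X₂ + maxCutOpt W w R' X₁ X₂ -
        ∑ᶠ e ∈ {e : Sym2 V | ∃ u v : V, e = s(u, v) ∧ W.Adj u v ∧
          u ∈ X₁ ∩ (L ∩ R') ∧ v ∈ X₂ ∩ (L ∩ R')}, (w e : ℕ∞) := by
  classical
  set Bc : Set (Sym2 V) := cutE W (X₁ ∩ (L ∩ R')) (X₂ ∩ (L ∩ R')) with hBc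
  -- split of the cut set of a univ-feasible bipartition
  have hunion : ∀ P₁ P₂ : Set V,
      cutE W P₁ P₂ = cutE W (P₁ ∩ L) (P₂ ∩ L) ∪ cutE W (P₁ ∩ R') (P₂ ∩ R') := by
    intro P₁ P₂
    ext e
    constructor
    · rintro ⟨u, v, rfl, hadj, hu, hv⟩
      rcases hnoedge hadj with ⟨huL, hvL⟩ | ⟨huR, hvR⟩
      · exact Or.inl ⟨u, v, rfl, hadj, ⟨hu, huL⟩, ⟨hv, hvL⟩⟩
      · exact Or.inr ⟨u, v, rfl, hadj, ⟨hu, huR⟩, ⟨hv, hvR⟩⟩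
    · rintro (⟨u, v, rfl, hadj, ⟨hu, _⟩, ⟨hv, _⟩⟩ | ⟨u, v, rfl, hadj, ⟨hu, _⟩, ⟨hv, _⟩⟩) <;>
        exact ⟨u, v, rfl, hadj, hu, hv⟩
  have hinter : ∀ P₁ P₂ : Set V, P₁ ∩ P₂ = ∅ → X₁ ⊆ P₁ → X₂ ⊆ P₂ →
      cutE W (P₁ ∩ L) (P₂ ∩ L) ∩ cutE W (P₁ ∩ R') (P₂ ∩ R') = Bc := by
    intro P₁ P₂ hd h1 h2
    have hmm : ∀ x : V, x ∈ P₁ → x ∈ P₂ → False := by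
      intro x hx1 hx2
      have : x ∈ P₁ ∩ P₂ := ⟨hx1, hx2⟩
      rw [hd] at this; exact this
    ext e
    constructor
    · rintro ⟨⟨u, v, rfl, hadj, ⟨hu1, huL⟩, ⟨hv2, hvL⟩⟩, ⟨u', v', he', hadj', ⟨hu1', huR⟩, ⟨hv2', hvR⟩⟩⟩
      rcases Sym2.eq_iff.mp he' with ⟨hu, hv⟩ | ⟨hu, hv⟩
      · subst hu; subst hv
        have huX : u ∈ X := hBX ⟨huL, huR⟩
        have hvX : v ∈ X := hBX ⟨hvL, hvR⟩
        rw [← hpart] at huX hvX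
        have huX1 : u ∈ X₁ := by
          rcases huX with h | h
          · exact h
          · exact absurd (hmm u hu1 (h2 h)) not_false
        have hvX2 : v ∈ X₂ := by
          rcases hvX with h | h
          · exact absurd (hmm v (h1 h) hv2) not_false
          · exact h
        exact ⟨u, v, rfl, hadj, ⟨huX1, huL, huR⟩, ⟨hvX2, hvL, hvR⟩⟩
      · have : u ∈ P₂ := by rw [hu]; exact hv2'
        exact absurd (hmm u hu1 this) not_false
    · rintro ⟨u, v, rfl, hadj, ⟨hu1, huL, huR⟩, ⟨hv2, hvL, hvR⟩⟩
      exact ⟨⟨u, v, rfl, hadj, ⟨h1 hu1, huL⟩, ⟨h2 hv2, hvL⟩⟩,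
        ⟨u, v, rfl, hadj, ⟨h1 hu1, huR⟩, ⟨h2 hv2, hvR⟩⟩⟩
  -- the key counting identity for univ-feasible bipartitions
  have key : ∀ P₁ P₂ : Set V, P₁ ∩ P₂ = ∅ → X₁ ⊆ P₁ → X₂ ⊆ P₂ →
      cw w (cutE W P₁ P₂) + cw w Bc =
        cw w (cutE W (P₁ ∩ L) (P₂ ∩ L)) + cw w (cutE W (P₁ ∩ R') (P₂ ∩ R')) := by
    intro P₁ P₂ hd h1 h2
    rw [hunion P₁ P₂, ← hinter P₁ P₂ hd h1 h2]
    exact cw_union_inter w _ _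
  -- attained optima
  obtain ⟨P₁, P₂, ⟨hPu, hPd, hP1, hP2⟩, hPval⟩ := opt_mem W w Set.univ X₁ X₂ hdisj
  obtain ⟨A₁, A₂, ⟨hAu, hAd, hA1, hA2⟩, hAval⟩ := opt_mem W w L X₁ X₂ hdisj
  obtain ⟨B₁, B₂, ⟨hBu, hBd, hB1, hB2⟩, hBval⟩ := opt_mem W w R' X₁ X₂ hdisj
  have hX1P : X₁ ⊆ P₁ := fun x hx => hP1 ⟨hx, trivial⟩
  have hX2P : X₂ ⊆ P₂ := fun x hx => hP2 ⟨hx, trivial⟩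
  have hmmA : ∀ x : V, x ∈ A₁ → x ∈ A₂ → False := by
    intro x hx1 hx2
    have : x ∈ A₁ ∩ A₂ := ⟨hx1, hx2⟩
    rw [hAd] at this; exact this
  have hmmB : ∀ x : V, x ∈ B₁ → x ∈ B₂ → False := by
    intro x hx1 hx2
    have : x ∈ B₁ ∩ B₂ := ⟨hx1, hx2⟩
    rw [hBd] at this; exact this
  have hmmX : ∀ x : V, x ∈ X₁ → x ∈ X₂ → False := by
    intro x hx1 hx2
    have : x ∈ X₁ ∩ X₂ := ⟨hx1, hx2⟩
    rw [hdisj] at this; exact this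
  have hA1L : A₁ ⊆ L := fun x hx => hAu ▸ Or.inl hx
  have hA2L : A₂ ⊆ L := fun x hx => hAu ▸ Or.inr hx
  have hB1R : B₁ ⊆ R' := fun x hx => hBu ▸ Or.inl hx
  have hB2R : B₂ ⊆ R' := fun x hx => hBu ▸ Or.inr hx
  -- direction 1: opt(univ) + c ≤ opt(L) + opt(R')
  have hle1 : maxCutOpt W w Set.univ X₁ X₂ + (cw w Bc : ℕ∞) ≤
      maxCutOpt W w L X₁ X₂ + maxCutOpt W w R' X₁ X₂ := by
    rw [hPval, ← Nat.cast_add, key P₁ P₂ hPd hX1P hX2P, Nat.cast_add]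
    have hmemL : ((cw w (cutE W (P₁ ∩ L) (P₂ ∩ L)) : ℕ∞)) ≤ maxCutOpt W w L X₁ X₂ := by
      rw [maxCutOpt_eq]
      apply le_sSup
      refine ⟨P₁ ∩ L, P₂ ∩ L, ⟨?_, ?_, ?_, ?_⟩, rfl⟩
      · rw [← Set.union_inter_distrib_right, hPu, Set.univ_inter]
      · rw [← Set.inter_inter_distrib_right, hPd, Set.empty_inter]
      · rintro x ⟨hx1, hxL⟩; exact ⟨hX1P hx1, hxL⟩
      · rintro x ⟨hx2, hxL⟩; exact ⟨hX2P hx2, hxL⟩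
    have hmemR : ((cw w (cutE W (P₁ ∩ R') (P₂ ∩ R')) : ℕ∞)) ≤ maxCutOpt W w R' X₁ X₂ := by
      rw [maxCutOpt_eq]
      apply le_sSup
      refine ⟨P₁ ∩ R', P₂ ∩ R', ⟨?_, ?_, ?_, ?_⟩, rfl⟩
      · rw [← Set.union_inter_distrib_right, hPu, Set.univ_inter]
      · rw [← Set.inter_inter_distrib_right, hPd, Set.empty_inter]
      · rintro x ⟨hx1, hxR⟩; exact ⟨hX1P hx1, hxR⟩
      · rintro x ⟨hx2, hxR⟩; exact ⟨hX2P hx2, hxR⟩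
    exact add_le_add hmemL hmemR
  -- direction 2: opt(L) + opt(R') ≤ opt(univ) + c
  have hle2 : maxCutOpt W w L X₁ X₂ + maxCutOpt W w R' X₁ X₂ ≤
      maxCutOpt W w Set.univ X₁ X₂ + (cw w Bc : ℕ∞) := by
    -- glue the two bipartitions
    set Q₁ := A₁ ∪ B₁ with hQ1
    set Q₂ := A₂ ∪ B₂ with hQ2
    -- no conflict on the boundary
    have hAB12 : ∀ x : V, x ∈ A₁ → x ∈ B₂ → False := by
      intro x hx1 hx2
      have hxX : x ∈ X := hBX ⟨hA1L hx1, hB2R hx2⟩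
      rw [← hpart] at hxX
      rcases hxX with h | h
      · exact hmmB x (hB1 ⟨h, hB2R hx2⟩) hx2
      · exact hmmA x hx1 (hA2 ⟨h, hA1L hx1⟩)
    have hAB21 : ∀ x : V, x ∈ B₁ → x ∈ A₂ → False := by
      intro x hx1 hx2
      have hxX : x ∈ X := hBX ⟨hA2L hx2, hB1R hx1⟩
      rw [← hpart] at hxX
      rcases hxX with h | h
      · exact hmmA x (hA1 ⟨h, hA2L hx2⟩) hx2
      · exact hmmB x hx1 (hB2 ⟨h, hB1R hx1⟩)
    have hQd : Q₁ ∩ Q₂ = ∅ := by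
      ext x
      simp only [Set.mem_inter_iff, Set.mem_union, Set.mem_empty_iff_false, iff_false, not_and,
        hQ1, hQ2]
      rintro (h1 | h1) (h2 | h2)
      · exact hmmA x h1 h2
      · exact hAB12 x h1 h2
      · exact hAB21 x h1 h2
      · exact hmmB x h1 h2
    have hQu : Q₁ ∪ Q₂ = Set.univ := by
      apply Set.eq_univ_of_forall
      intro x
      have : x ∈ L ∪ R' := hsep ▸ trivial
      rcases this with h | h
      · rcases (hAu ▸ h : x ∈ A₁ ∪ A₂) with h' | h'
        · exact Or.inl (Or.inl h')
        · exact Or.inr (Or.inl h')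
      · rcases (hBu ▸ h : x ∈ B₁ ∪ B₂) with h' | h'
        · exact Or.inl (Or.inr h')
        · exact Or.inr (Or.inr h')
    have hQ1' : X₁ ⊆ Q₁ := by
      intro x hx
      have : x ∈ L ∪ R' := hsep ▸ trivial
      rcases this with h | h
      · exact Or.inl (hA1 ⟨hx, h⟩)
      · exact Or.inr (hB1 ⟨hx, h⟩)
    have hQ2' : X₂ ⊆ Q₂ := by
      intro x hx
      have : x ∈ L ∪ R' := hsep ▸ trivial
      rcases this with h | h
      · exact Or.inl (hA2 ⟨hx, h⟩)
      · exact Or.inr (hB2 ⟨hx, h⟩)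
    -- the restrictions of the glued bipartition are the original ones
    have hQ1L : Q₁ ∩ L = A₁ := by
      ext x
      constructor
      · rintro ⟨h1 | h1, hxL⟩
        · exact h1
        · have hxX : x ∈ X := hBX ⟨hxL, hB1R h1⟩
          rw [← hpart] at hxX
          rcases hxX with h | h
          · exact hA1 ⟨h, hxL⟩
          · exact absurd (hmmB x h1 (hB2 ⟨h, hB1R h1⟩)) not_false
      · intro hx; exact ⟨Or.inl hx, hA1L hx⟩
    have hQ2L : Q₂ ∩ L = A₂ := by
      ext x
      constructor
      · rintro ⟨h1 | h1, hxL⟩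
        · exact h1
        · have hxX : x ∈ X := hBX ⟨hxL, hB2R h1⟩
          rw [← hpart] at hxX
          rcases hxX with h | h
          · exact absurd (hmmB x (hB1 ⟨h, hB2R h1⟩) h1) not_false
          · exact hA2 ⟨h, hxL⟩
      · intro hx; exact ⟨Or.inl hx, hA2L hx⟩
    have hQ1R : Q₁ ∩ R' = B₁ := by
      ext x
      constructor
      · rintro ⟨h1 | h1, hxR⟩
        · have hxX : x ∈ X := hBX ⟨hA1L h1, hxR⟩
          rw [← hpart] at hxX
          rcases hxX with h | h
          · exact hB1 ⟨h, hxR⟩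
          · exact absurd (hmmA x h1 (hA2 ⟨h, hA1L h1⟩)) not_false
        · exact h1
      · intro hx; exact ⟨Or.inr hx, hB1R hx⟩
    have hQ2R : Q₂ ∩ R' = B₂ := by
      ext x
      constructor
      · rintro ⟨h1 | h1, hxR⟩
        · have hxX : x ∈ X := hBX ⟨hA2L h1, hxR⟩
          rw [← hpart] at hxX
          rcases hxX with h | h
          · exact absurd (hmmA x (hA1 ⟨h, hA2L h1⟩) h1) not_false
          · exact hB2 ⟨h, hxR⟩
        · exact h1
      · intro hx; exact ⟨Or.inr hx, hB2R hx⟩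
    have hkey := key Q₁ Q₂ hQd hQ1' hQ2'
    rw [hQ1L, hQ2L, hQ1R, hQ2R] at hkey
    rw [hAval, hBval, ← Nat.cast_add, ← hkey, Nat.cast_add]
    have hmemU : ((cw w (cutE W Q₁ Q₂) : ℕ∞)) ≤ maxCutOpt W w Set.univ X₁ X₂ := by
      rw [maxCutOpt_eq]
      apply le_sSup
      exact ⟨Q₁, Q₂, ⟨hQu, hQd, fun x hx => hQ1' hx.1, fun x hx => hQ2' hx.1⟩, rfl⟩
    exact add_le_add_left hmemU _
  have heq : maxCutOpt W w L X₁ X₂ + maxCutOpt W w R' X₁ X₂ =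
      maxCutOpt W w Set.univ X₁ X₂ + (cw w Bc : ℕ∞) := le_antisymm hle2 hle1
  have hg : ∑ᶠ e ∈ {e : Sym2 V | ∃ u v : V, e = s(u, v) ∧ W.Adj u v ∧
      u ∈ X₁ ∩ (L ∩ R') ∧ v ∈ X₂ ∩ (L ∩ R')}, (w e : ℕ∞) = ((cw w Bc : ℕ) : ℕ∞) :=
    cw_finsum w Bc
  rw [hg, heq]
  exact ((ENat.addLECancellable_of_ne_top (by simp)).add_tsub_cancel_right).symm
end
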